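/- arXiv:2003.03248 — 8 statements merged into one kernel-verified Lean document; each statement's English description precedes it below -/
import Mathlib

section
/- Let ξ > 0 be such that D_ξ := DᵀD − ξ²I is invertible, and let ω ≥ 0 be such that A(iω) is invertible. Then ξ is a singular value of G(iω), i.e. det(G(iω)* G(iω) − ξ² I) = 0, if and only if λ = iω is an eigenvalue of the operator L_ξ, i.e. there exists a continuously differentiable function u : [−τ_max, τ_max] → ℂ^{2n}, not identically zero, with u′(t) = iω·u(t) for all t ∈ [−τ_max, τ_max] and u′(0) = M_0 u(0) + Σ_{i=1}^m (M_i u(−τ_i) + M_{−i} u(τ_i)). -/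
/-!
An eigenfunction `φ` of `L_ξ` solves `φ' = λ φ`, so it is `t ↦ e^{λt} v`, and its boundary condition
says `H_ξ(λ) v = 0`. Since `A(iω)ᴴ = -iω - A₀ᵀ - Σᵢ e^{iωτᵢ} Aᵢᵀ`, the matrix `H_ξ(iω)` is the
Hamiltonian matrix of `(A(iω), B, C, D)` at `s = ξ²`. A kernel vector `(x, p)` of it determines the
input `u = -D_ξ⁻¹ (Dᵀ C x + Bᵀ p)`, i.e. `Bᴴ p + Dᴴ y = ξ² u` with `y = C x + D u`, and the
identity `1 - D D_ξ⁻¹ Dᵀ = -ξ² (D Dᵀ - ξ²)⁻¹` turns its two block rows into `A x = B u` and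
`Aᴴ p = Cᴴ y`.
Eliminating `x = A⁻¹ B u` and `p = A⁻ᴴ Cᴴ y` instead gives `y = G u` and `Gᴴ G u = ξ² u`; as `A`
and `D_ξ` are invertible, `u` vanishes exactly when `(x, p)` does.
-/

open Matrix Complex

noncomputable section

variable {n nu ny m : ℕ}

/-- `D_ξ = Dᵀ D − ξ² I`. -/
def Dxi (D : Matrix (Fin ny) (Fin nu) ℝ) (ξ : ℝ) : Matrix (Fin nu) (Fin nu) ℝ :=
  Dᵀ * D - ξ ^ 2 • (1 : Matrix (Fin nu) (Fin nu) ℝ)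

/-- `(Dᵀ)_ξ = D Dᵀ − ξ² I`, the matrix denoted `D_ξ^{-T}`-inverse base in the paper
(the only dimensionally consistent reading of the `(2,1)` block of `M₀`).
Note that it is invertible iff `D_ξ` is (for `ξ ≠ 0`), since `DᵀD` and `DDᵀ` have the
same nonzero eigenvalues. -/
def DxiT (D : Matrix (Fin ny) (Fin nu) ℝ) (ξ : ℝ) : Matrix (Fin ny) (Fin ny) ℝ :=
  D * Dᵀ - ξ ^ 2 • (1 : Matrix (Fin ny) (Fin ny) ℝ)

/-- The block matrix `M₀`. -/
def Mzero (A0 : Matrix (Fin n) (Fin n) ℝ) (B : Matrix (Fin n) (Fin nu) ℝ)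
    (C : Matrix (Fin ny) (Fin n) ℝ) (D : Matrix (Fin ny) (Fin nu) ℝ) (ξ : ℝ) :
    Matrix (Fin n ⊕ Fin n) (Fin n ⊕ Fin n) ℝ :=
  fromBlocks (A0 - B * (Dxi D ξ)⁻¹ * Dᵀ * C) (-(B * (Dxi D ξ)⁻¹ * Bᵀ))
    (ξ ^ 2 • (Cᵀ * (DxiT D ξ)⁻¹ * C)) (-A0ᵀ + Cᵀ * D * (Dxi D ξ)⁻¹ * Bᵀ)

/-- The block matrix `Mᵢ` for `1 ≤ i ≤ m`. -/
def Mpos (Ai : Matrix (Fin n) (Fin n) ℝ) : Matrix (Fin n ⊕ Fin n) (Fin n ⊕ Fin n) ℝ :=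
  fromBlocks Ai 0 0 0

/-- The block matrix `M₋ᵢ` for `1 ≤ i ≤ m`. -/
def Mneg (Ai : Matrix (Fin n) (Fin n) ℝ) : Matrix (Fin n ⊕ Fin n) (Fin n ⊕ Fin n) ℝ :=
  fromBlocks 0 0 0 (-Aiᵀ)

/-- `H_ξ(λ) = λI − M₀ − Σᵢ (Mᵢ e^{−λτᵢ} + M₋ᵢ e^{λτᵢ})`. -/
def Hxi (A0 : Matrix (Fin n) (Fin n) ℝ) (A : Fin m → Matrix (Fin n) (Fin n) ℝ)
    (B : Matrix (Fin n) (Fin nu) ℝ) (C : Matrix (Fin ny) (Fin n) ℝ)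
    (D : Matrix (Fin ny) (Fin nu) ℝ) (τ : Fin m → ℝ) (ξ : ℝ) (lam : ℂ) :
    Matrix (Fin n ⊕ Fin n) (Fin n ⊕ Fin n) ℂ :=
  lam • (1 : Matrix (Fin n ⊕ Fin n) (Fin n ⊕ Fin n) ℂ)
    - (Mzero A0 B C D ξ).map Complex.ofReal
    - ∑ i : Fin m, (Complex.exp (-lam * (τ i : ℂ)) • (Mpos (A i)).map Complex.ofReal
        + Complex.exp (lam * (τ i : ℂ)) • (Mneg (A i)).map Complex.ofReal)

/-- `A(λ) = λI − A₀ − Σᵢ Aᵢ e^{−λτᵢ}`. -/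
def Amat (A0 : Matrix (Fin n) (Fin n) ℝ) (A : Fin m → Matrix (Fin n) (Fin n) ℝ)
    (τ : Fin m → ℝ) (lam : ℂ) : Matrix (Fin n) (Fin n) ℂ :=
  lam • (1 : Matrix (Fin n) (Fin n) ℂ) - A0.map Complex.ofReal
    - ∑ i : Fin m, Complex.exp (-lam * (τ i : ℂ)) • (A i).map Complex.ofReal

/-- The transfer function `G(λ) = C A(λ)⁻¹ B + D`. -/
def Gmat (A0 : Matrix (Fin n) (Fin n) ℝ) (A : Fin m → Matrix (Fin n) (Fin n) ℝ)
    (B : Matrix (Fin n) (Fin nu) ℝ) (C : Matrix (Fin ny) (Fin n) ℝ)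
    (D : Matrix (Fin ny) (Fin nu) ℝ) (τ : Fin m → ℝ) (lam : ℂ) :
    Matrix (Fin ny) (Fin nu) ℂ :=
  C.map Complex.ofReal * (Amat A0 A τ lam)⁻¹ * B.map Complex.ofReal + D.map Complex.ofReal

/-- `τ_max`, the maximum of the delays. -/
def tauMax [NeZero m] (τ : Fin m → ℝ) : ℝ :=
  Finset.univ.sup' Finset.univ_nonempty τ

/-- `λ` is an eigenvalue of the infinite-dimensional operator `L_ξ`: there is a continuously
differentiable, not identically zero function `u : [−τ_max, τ_max] → ℂ^{2n}` with
`u′(t) = λ u(t)` on the interval and `u′(0) = M₀ u(0) + Σᵢ (Mᵢ u(−τᵢ) + M₋ᵢ u(τᵢ))`. -/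
def IsEigLxi [NeZero m] (A0 : Matrix (Fin n) (Fin n) ℝ) (A : Fin m → Matrix (Fin n) (Fin n) ℝ)
    (B : Matrix (Fin n) (Fin nu) ℝ) (C : Matrix (Fin ny) (Fin n) ℝ)
    (D : Matrix (Fin ny) (Fin nu) ℝ) (τ : Fin m → ℝ) (ξ : ℝ) (lam : ℂ) : Prop :=
  ∃ u : ℝ → (Fin n ⊕ Fin n → ℂ),
    (∀ t ∈ Set.Icc (-(tauMax τ)) (tauMax τ),
      HasDerivWithinAt u (lam • u t) (Set.Icc (-(tauMax τ)) (tauMax τ)) t) ∧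
    (∃ t ∈ Set.Icc (-(tauMax τ)) (tauMax τ), u t ≠ 0) ∧
    lam • u 0 = (Mzero A0 B C D ξ).map Complex.ofReal *ᵥ u 0
      + ∑ i : Fin m, ((Mpos (A i)).map Complex.ofReal *ᵥ u (-(τ i))
          + (Mneg (A i)).map Complex.ofReal *ᵥ u (τ i))

namespace Matrix

section Hamiltonian

variable {K ι κ μ : Type*} [Fintype ι] [Fintype κ] [Fintype μ]

section CommRing

variable [CommRing K]

lemma mulVec_eq_iff_eq_inv_mulVec [DecidableEq ι] {M : Matrix ι ι K} (hM : IsUnit M)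
    {x w : ι → K} : M *ᵥ x = w ↔ x = M⁻¹ *ᵥ w := by
  have hdet := (isUnit_iff_isUnit_det M).mp hM
  constructor
  · rintro rfl
    rw [mulVec_mulVec, nonsing_inv_mul _ hdet, one_mulVec]
  · rintro rfl
    rw [mulVec_mulVec, mul_nonsing_inv _ hdet, one_mulVec]

lemma one_sub_mul_inv_mul_eq_neg_smul_inv [DecidableEq κ] [DecidableEq μ] (D : Matrix μ κ K)
    (D' : Matrix κ μ K) (s : K) (h : IsUnit (D' * D - s • 1)) (h' : IsUnit (D * D' - s • 1)) :
    1 - D * (D' * D - s • 1)⁻¹ * D' = -(s • (D * D' - s • 1)⁻¹) := by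
  have hdet := (isUnit_iff_isUnit_det _).mp h
  have hdet' := (isUnit_iff_isUnit_det _).mp h'
  have hpush : (D * D' - s • 1) * D = D * (D' * D - s • 1) := by
    simp only [Matrix.sub_mul, Matrix.mul_sub, Matrix.smul_mul, Matrix.mul_smul, Matrix.one_mul,
      Matrix.mul_one, Matrix.mul_assoc]
  calc 1 - D * (D' * D - s • 1)⁻¹ * D'
      = (D * D' - s • 1)⁻¹ * ((D * D' - s • 1) * (1 - D * (D' * D - s • 1)⁻¹ * D')) := by
        rw [← Matrix.mul_assoc, nonsing_inv_mul _ hdet', Matrix.one_mul]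
    _ = (D * D' - s • 1)⁻¹ * -(s • 1) := by
        rw [Matrix.mul_sub, Matrix.mul_one, ← Matrix.mul_assoc, ← Matrix.mul_assoc, hpush,
          Matrix.mul_assoc D, mul_nonsing_inv _ hdet, Matrix.mul_one, sub_sub_cancel_left]
    _ = -(s • (D * D' - s • 1)⁻¹) := by
        rw [Matrix.mul_neg, Matrix.mul_smul, Matrix.mul_one]

variable [StarRing K]

def transferMatrix [DecidableEq ι] (A : Matrix ι ι K) (B : Matrix ι κ K) (C : Matrix μ ι K)
    (D : Matrix μ κ K) : Matrix μ κ K :=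
  C * A⁻¹ * B + D

def hamiltonianMatrix [DecidableEq κ] [DecidableEq μ] (A : Matrix ι ι K) (B : Matrix ι κ K)
    (C : Matrix μ ι K) (D : Matrix μ κ K) (s : K) : Matrix (ι ⊕ ι) (ι ⊕ ι) K :=
  fromBlocks (A + B * (Dᴴ * D - s • 1)⁻¹ * Dᴴ * C) (B * (Dᴴ * D - s • 1)⁻¹ * Bᴴ)
    (-(s • (Cᴴ * (D * Dᴴ - s • 1)⁻¹ * C))) (-Aᴴ - Cᴴ * D * (Dᴴ * D - s • 1)⁻¹ * Bᴴ)

/-- State `x`, costate `p` and input `u` of the frequency-domain Hamiltonian system, whose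
output is `y = C x + D u`. -/
def IsHamiltonianSolution (A : Matrix ι ι K) (B : Matrix ι κ K) (C : Matrix μ ι K)
    (D : Matrix μ κ K) (s : K) (x p : ι → K) (u : κ → K) : Prop :=
  A *ᵥ x = B *ᵥ u ∧ Aᴴ *ᵥ p = Cᴴ *ᵥ (C *ᵥ x + D *ᵥ u) ∧
    Bᴴ *ᵥ p + Dᴴ *ᵥ (C *ᵥ x + D *ᵥ u) = s • u

variable {A : Matrix ι ι K} {B : Matrix ι κ K} {C : Matrix μ ι K} {D : Matrix μ κ K} {s : K}

lemma hamiltonianMatrix_mulVec_eq_zero_iff [DecidableEq κ] [DecidableEq μ]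
    (hE : IsUnit (Dᴴ * D - s • 1)) (hF : IsUnit (D * Dᴴ - s • 1)) (x p : ι → K) :
    hamiltonianMatrix A B C D s *ᵥ Sum.elim x p = 0 ↔
      ∃ u, IsHamiltonianSolution A B C D s x p u := by
  set E := (Dᴴ * D - s • 1)⁻¹
  have hu : ∀ u, Bᴴ *ᵥ p + Dᴴ *ᵥ (C *ᵥ x + D *ᵥ u) = s • u ↔
      (Dᴴ * D - s • 1) *ᵥ u = -(Dᴴ *ᵥ (C *ᵥ x) + Bᴴ *ᵥ p) := by
    intro u
    rw [sub_mulVec, smul_mulVec, one_mulVec, ← mulVec_mulVec, mulVec_add]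
    constructor <;> intro h <;> linear_combination (norm := abel) h
  set u₀ := E *ᵥ -(Dᴴ *ᵥ (C *ᵥ x) + Bᴴ *ᵥ p)
  have hrow₁ : (A + B * E * Dᴴ * C) *ᵥ x + (B * E * Bᴴ) *ᵥ p = A *ᵥ x - B *ᵥ u₀ := by
    simp only [add_mulVec, ← mulVec_mulVec, u₀, mulVec_neg, mulVec_add, sub_neg_eq_add]
    abel
  have hy₀ : C *ᵥ x + D *ᵥ u₀ = -(s • ((D * Dᴴ - s • 1)⁻¹ *ᵥ (C *ᵥ x))) - (D * E * Bᴴ) *ᵥ p := by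
    have h := congrArg (· *ᵥ (C *ᵥ x)) (one_sub_mul_inv_mul_eq_neg_smul_inv D Dᴴ s hE hF)
    simp only [sub_mulVec, one_mulVec, neg_mulVec, smul_mulVec] at h
    simp only [u₀, mulVec_neg, mulVec_add, ← h, ← mulVec_mulVec]
    abel
  have hrow₂ : -(s • (Cᴴ * (D * Dᴴ - s • 1)⁻¹ * C)) *ᵥ x + (-Aᴴ - Cᴴ * D * E * Bᴴ) *ᵥ p
      = Cᴴ *ᵥ (C *ᵥ x + D *ᵥ u₀) - Aᴴ *ᵥ p := by
    rw [hy₀]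
    simp only [neg_mulVec, smul_mulVec, sub_mulVec, ← mulVec_mulVec, mulVec_sub, mulVec_neg,
      mulVec_smul]
    abel
  rw [hamiltonianMatrix, fromBlocks_mulVec, Sum.elim_comp_inl, Sum.elim_comp_inr,
    ← Sum.elim_zero_zero, Sum.elim_eq_iff, hrow₁, hrow₂, sub_eq_zero, sub_eq_zero]
  constructor
  · rintro ⟨h₁, h₂⟩
    exact ⟨u₀, h₁, h₂.symm, (hu u₀).mpr ((mulVec_eq_iff_eq_inv_mulVec hE).mpr rfl)⟩
  · rintro ⟨u, h₁, h₂, h₃⟩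
    obtain rfl := (mulVec_eq_iff_eq_inv_mulVec hE).mp ((hu u).mp h₃)
    exact ⟨h₁, h₂.symm⟩

lemma exists_isHamiltonianSolution_iff [DecidableEq ι] (hA : IsUnit A) (u : κ → K) :
    (∃ x p, IsHamiltonianSolution A B C D s x p u) ↔
      (transferMatrix A B C D)ᴴ *ᵥ (transferMatrix A B C D *ᵥ u) = s • u := by
  have hAH : IsUnit Aᴴ := (isUnit_conjTranspose A).mpr hA
  have hG : ∀ u, transferMatrix A B C D *ᵥ u = C *ᵥ (A⁻¹ *ᵥ (B *ᵥ u)) + D *ᵥ u := fun u => by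
    rw [transferMatrix, add_mulVec, ← mulVec_mulVec, ← mulVec_mulVec]
  have hGH : ∀ y, (transferMatrix A B C D)ᴴ *ᵥ y = Bᴴ *ᵥ ((Aᴴ)⁻¹ *ᵥ (Cᴴ *ᵥ y)) + Dᴴ *ᵥ y :=
    fun y => by
      rw [transferMatrix, conjTranspose_add, conjTranspose_mul, conjTranspose_mul,
        conjTranspose_nonsing_inv, add_mulVec, ← mulVec_mulVec, ← mulVec_mulVec]
  constructor
  · rintro ⟨x, p, hx, hp, hu⟩
    rw [mulVec_eq_iff_eq_inv_mulVec hA] at hx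
    rw [mulVec_eq_iff_eq_inv_mulVec hAH] at hp
    rw [hG, ← hx, hGH, ← hp, hu]
  · intro hu
    refine ⟨A⁻¹ *ᵥ (B *ᵥ u), (Aᴴ)⁻¹ *ᵥ (Cᴴ *ᵥ (transferMatrix A B C D *ᵥ u)), ?_, ?_, ?_⟩
    · exact (mulVec_eq_iff_eq_inv_mulVec hA).mpr rfl
    · rw [← hG]
      exact (mulVec_eq_iff_eq_inv_mulVec hAH).mpr rfl
    · rw [← hG, ← hGH, hu]

lemma IsHamiltonianSolution.elim_eq_zero_iff [DecidableEq ι] [DecidableEq κ] {x p : ι → K}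
    {u : κ → K} (h : IsHamiltonianSolution A B C D s x p u) (hA : IsUnit A)
    (hE : IsUnit (Dᴴ * D - s • 1)) : Sum.elim x p = 0 ↔ u = 0 := by
  obtain ⟨hx, hp, hu⟩ := h
  rw [← Sum.elim_zero_zero, Sum.elim_eq_iff]
  constructor
  · rintro ⟨rfl, rfl⟩
    simp only [mulVec_zero, zero_add, mulVec_mulVec] at hu
    have hker : (Dᴴ * D - s • 1) *ᵥ u = 0 := by
      rw [sub_mulVec, hu, smul_mulVec, one_mulVec, sub_self]
    rwa [mulVec_eq_iff_eq_inv_mulVec hE, mulVec_zero] at hker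
  · rintro rfl
    rw [mulVec_zero, mulVec_eq_iff_eq_inv_mulVec hA, mulVec_zero] at hx
    rw [hx, mulVec_zero, zero_add, mulVec_zero, mulVec_zero,
      mulVec_eq_iff_eq_inv_mulVec ((isUnit_conjTranspose A).mpr hA), mulVec_zero] at hp
    exact ⟨hx, hp⟩

end CommRing

section Field

variable [Field K]

lemma isUnit_mul_sub_smul_one_comm [DecidableEq κ] [DecidableEq μ] (D : Matrix μ κ K)
    (D' : Matrix κ μ K) {s : K} (hs : s ≠ 0) :
    IsUnit (D * D' - s • 1) ↔ IsUnit (D' * D - s • 1) := by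
  have h₁ : D * D' - s • 1 = (-s) • (1 - (s⁻¹ • D) * D') := by
    rw [Matrix.smul_mul, smul_sub, smul_smul, neg_mul, mul_inv_cancel₀ hs, neg_smul, neg_smul,
      one_smul, neg_sub_neg]
  have h₂ : D' * D - s • 1 = (-s) • (1 - D' * (s⁻¹ • D)) := by
    rw [Matrix.mul_smul, smul_sub, smul_smul, neg_mul, mul_inv_cancel₀ hs, neg_smul, neg_smul,
      one_smul, neg_sub_neg]
  have hs' : IsUnit (-s) := (neg_ne_zero.mpr hs).isUnit
  rw [isUnit_iff_isUnit_det, isUnit_iff_isUnit_det, h₁, h₂, det_smul, det_smul, IsUnit.mul_iff,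
    IsUnit.mul_iff, det_one_sub_mul_comm]
  simp only [hs'.pow, true_and]

theorem det_hamiltonianMatrix_eq_zero_iff [StarRing K] [DecidableEq ι] [DecidableEq κ]
    [DecidableEq μ] {A : Matrix ι ι K} {B : Matrix ι κ K} {C : Matrix μ ι K} {D : Matrix μ κ K}
    {s : K} (hA : IsUnit A) (hE : IsUnit (Dᴴ * D - s • 1)) (hF : IsUnit (D * Dᴴ - s • 1)) :
    (hamiltonianMatrix A B C D s).det = 0 ↔
      ((transferMatrix A B C D)ᴴ * transferMatrix A B C D - s • 1).det = 0 := by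
  rw [← exists_mulVec_eq_zero_iff, ← exists_mulVec_eq_zero_iff]
  calc (∃ v ≠ 0, hamiltonianMatrix A B C D s *ᵥ v = 0)
      ↔ ∃ u ≠ 0, ∃ x p, IsHamiltonianSolution A B C D s x p u := by
        constructor
        · rintro ⟨v, hv, hHv⟩
          rw [← Sum.elim_comp_inl_inr v, hamiltonianMatrix_mulVec_eq_zero_iff hE hF] at hHv
          obtain ⟨u, hu⟩ := hHv
          refine ⟨u, (hu.elim_eq_zero_iff hA hE).not.mp ?_, _, _, hu⟩
          rwa [Sum.elim_comp_inl_inr]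
        · rintro ⟨u, hu₀, x, p, hu⟩
          refine ⟨Sum.elim x p, (hu.elim_eq_zero_iff hA hE).not.mpr hu₀, ?_⟩
          exact (hamiltonianMatrix_mulVec_eq_zero_iff hE hF x p).mpr ⟨u, hu⟩
    _ ↔ ∃ u ≠ 0, ((transferMatrix A B C D)ᴴ * transferMatrix A B C D - s • 1) *ᵥ u = 0 := by
        refine exists_congr fun u => and_congr_right fun _ => ?_
        rw [exists_isHamiltonianSolution_iff hA, sub_mulVec, smul_mulVec, one_mulVec,
          sub_eq_zero, mulVec_mulVec]

lemma map_nonsing_inv {L : Type*} [Field L] [DecidableEq ι] (f : K →+* L) (M : Matrix ι ι K) :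
    M⁻¹.map f = (M.map f)⁻¹ := by
  rw [inv_def, inv_def, Matrix.map_smul' _ _ _ (map_mul f), Ring.inverse_eq_inv',
    Ring.inverse_eq_inv', map_inv₀, RingHom.map_det, ← RingHom.mapMatrix_apply,
    RingHom.map_adjugate]
  rfl

end Field

end Hamiltonian

section Complexification

variable {ι κ μ : Type*}

@[simp] lemma map_ofReal_mul [Fintype κ] (M : Matrix ι κ ℝ) (N : Matrix κ μ ℝ) :
    (M * N).map ofReal = M.map ofReal * N.map ofReal :=
  Matrix.map_mul (f := ofRealHom)

@[simp] lemma map_ofReal_transpose (M : Matrix ι κ ℝ) : Mᵀ.map ofReal = (M.map ofReal)ᴴ := by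
  ext; simp

@[simp] lemma map_ofReal_smul (r : ℝ) (M : Matrix ι κ ℝ) :
    (r • M).map ofReal = (r : ℂ) • M.map ofReal := by
  ext; simp

@[simp] lemma map_ofReal_inv [Fintype ι] [DecidableEq ι] (M : Matrix ι ι ℝ) :
    M⁻¹.map ofReal = (M.map ofReal)⁻¹ :=
  map_nonsing_inv ofRealHom M

end Complexification

end Matrix

open Set

lemma hasDerivAt_cexp_mul_ofReal (c : ℂ) (t : ℝ) :
    HasDerivAt (fun t : ℝ => exp (c * t)) (exp (c * t) * c) t := by
  simpa using ((hasDerivAt_id (t : ℂ)).const_mul c).cexp.comp_ofReal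

theorem Convex.eq_exp_smul_of_hasDerivWithinAt {E : Type*} [NormedAddCommGroup E]
    [NormedSpace ℂ E] {s : Set ℝ} (hs : Convex ℝ s) {lam : ℂ} {u : ℝ → E}
    (hu : ∀ t ∈ s, HasDerivWithinAt u (lam • u t) s t) {t₀ t : ℝ} (ht₀ : t₀ ∈ s) (ht : t ∈ s) :
    u t = exp (lam * (t - t₀)) • u t₀ := by
  have hg : ∀ t ∈ s, HasDerivWithinAt (fun t : ℝ => exp (-lam * t) • u t) 0 s t := by
    intro t ht
    refine ((hasDerivAt_cexp_mul_ofReal (-lam) t).hasDerivWithinAt.smul (hu t ht)).congr_deriv ?_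
    rw [smul_smul, ← add_smul, mul_neg, add_neg_cancel, zero_smul]
  have hconst : exp (-lam * t) • u t = exp (-lam * t₀) • u t₀ := by
    simpa [sub_eq_zero] using hs.norm_image_sub_le_of_norm_hasDerivWithin_le hg
      (f' := fun _ => 0) (fun _ _ => norm_zero.le) ht₀ ht
  calc u t = exp (lam * t) • exp (-lam * t) • u t := by
        rw [smul_smul, ← exp_add, neg_mul, add_neg_cancel, exp_zero, one_smul]
    _ = exp (lam * (t - t₀)) • u t₀ := by
        rw [hconst, smul_smul, ← exp_add]
        congr 2
        ring

section DelaySystem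

variable (A0 : Matrix (Fin n) (Fin n) ℝ) (A : Fin m → Matrix (Fin n) (Fin n) ℝ)
  (B : Matrix (Fin n) (Fin nu) ℝ) (C : Matrix (Fin ny) (Fin n) ℝ) (D : Matrix (Fin ny) (Fin nu) ℝ)
  (τ : Fin m → ℝ) (ξ : ℝ)

lemma isEigLxi_iff_exists_Hxi_mulVec_eq_zero [NeZero m] (hτ : ∀ i, 0 ≤ τ i) (lam : ℂ) :
    IsEigLxi A0 A B C D τ ξ lam ↔ ∃ v ≠ 0, Hxi A0 A B C D τ ξ lam *ᵥ v = 0 := by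
  set T := tauMax τ
  have hτT : ∀ i, τ i ≤ T := fun i => Finset.le_sup' τ (Finset.mem_univ i)
  have hT : 0 ≤ T := (hτ 0).trans (hτT 0)
  have h0 : (0 : ℝ) ∈ Icc (-T) T := ⟨neg_nonpos.mpr hT, hT⟩
  have hH : ∀ u : ℝ → (Fin n ⊕ Fin n → ℂ), (∀ t ∈ Icc (-T) T, u t = exp (lam * t) • u 0) →
      Hxi A0 A B C D τ ξ lam *ᵥ u 0 = lam • u 0 - ((Mzero A0 B C D ξ).map ofReal *ᵥ u 0
        + ∑ i, ((Mpos (A i)).map ofReal *ᵥ u (-τ i) + (Mneg (A i)).map ofReal *ᵥ u (τ i))) := by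
    intro u hu
    rw [Finset.sum_congr rfl fun i _ => by
      rw [hu (-τ i) ⟨neg_le_neg (hτT i), (neg_nonpos.mpr (hτ i)).trans hT⟩,
        hu (τ i) ⟨(neg_nonpos.mpr hT).trans (hτ i), hτT i⟩]]
    simp [Hxi, sub_mulVec, add_mulVec, sum_mulVec, smul_mulVec, mulVec_smul, sub_sub]
  constructor
  · rintro ⟨u, hu, ⟨t, ht, hut⟩, hbc⟩
    have hexp : ∀ t ∈ Icc (-T) T, u t = exp (lam * t) • u 0 := fun t ht => by
      simpa using (convex_Icc (-T) T).eq_exp_smul_of_hasDerivWithinAt hu h0 ht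
    refine ⟨u 0, fun h => hut (by rw [hexp t ht, h, smul_zero]), ?_⟩
    rw [hH u hexp, hbc, sub_self]
  · rintro ⟨v, hv, hHv⟩
    refine ⟨fun t => exp (lam * t) • v, fun t _ => ?_, ⟨0, h0, by simpa using hv⟩, ?_⟩
    · refine ((hasDerivAt_cexp_mul_ofReal lam t).smul_const v).hasDerivWithinAt.congr_deriv ?_
      rw [smul_smul, mul_comm]
    · have h := hH (fun t => exp (lam * t) • v) (fun t _ => by simp)
      simp only [ofReal_zero, mul_zero, exp_zero, one_smul] at h ⊢
      rwa [hHv, eq_comm, sub_eq_zero] at h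

lemma Amat_I_mul_conjTranspose (ω : ℝ) :
    (Amat A0 A τ (I * ω))ᴴ =
      -(I * ω) • 1 - (A0.map ofReal)ᴴ - ∑ i, exp (I * ω * τ i) • ((A i).map ofReal)ᴴ := by
  simp [Amat, conjTranspose_sum, ← exp_conj]

lemma Hxi_I_mul_eq_hamiltonianMatrix (ω : ℝ) :
    Hxi A0 A B C D τ ξ (I * ω) = hamiltonianMatrix (Amat A0 A τ (I * ω)) (B.map ofReal)
      (C.map ofReal) (D.map ofReal) ((ξ : ℂ) ^ 2) := by
  rw [hamiltonianMatrix, Amat_I_mul_conjTranspose]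
  ext (i | i) (j | j) <;>
    simp [Hxi, Mzero, Mpos, Mneg, Amat, Dxi, DxiT, fromBlocks_map, Matrix.map_sub, Matrix.map_add,
      Matrix.map_neg, Matrix.sum_apply, one_apply] <;>
    ring

end DelaySystem

theorem singular_value_iff_eig_Lxi_general [NeZero m]
    (A0 : Matrix (Fin n) (Fin n) ℝ) (A : Fin m → Matrix (Fin n) (Fin n) ℝ)
    (B : Matrix (Fin n) (Fin nu) ℝ) (C : Matrix (Fin ny) (Fin n) ℝ)
    (D : Matrix (Fin ny) (Fin nu) ℝ) (τ : Fin m → ℝ) (hτ : ∀ i, 0 ≤ τ i)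
    (ξ : ℝ) (hξ : 0 < ξ) (hD : IsUnit (Dxi D ξ))
    (ω : ℝ) (hA : IsUnit (Amat A0 A τ (Complex.I * ω))) :
    ((Gmat A0 A B C D τ (Complex.I * ω))ᴴ * Gmat A0 A B C D τ (Complex.I * ω)
        - ((ξ : ℂ) ^ 2) • 1).det = 0
      ↔ IsEigLxi A0 A B C D τ ξ (Complex.I * ω) := by
  have hE : IsUnit ((D.map ofReal)ᴴ * D.map ofReal - ((ξ : ℂ) ^ 2) • 1) := by
    have h : IsUnit ((Dxi D ξ).map ofReal) := hD.map ofRealHom.mapMatrix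
    simpa [Dxi, Matrix.map_sub] using h
  have hF : IsUnit (D.map ofReal * (D.map ofReal)ᴴ - ((ξ : ℂ) ^ 2) • 1) :=
    (isUnit_mul_sub_smul_one_comm _ _ (pow_ne_zero 2 (ofReal_ne_zero.mpr hξ.ne'))).mpr hE
  rw [isEigLxi_iff_exists_Hxi_mulVec_eq_zero A0 A B C D τ ξ hτ, exists_mulVec_eq_zero_iff,
    Hxi_I_mul_eq_hamiltonianMatrix, det_hamiltonianMatrix_eq_zero_iff hA hE hF]
  rfl

/-- for `ξ > 0` with `D_ξ` invertible and `ω ≥ 0` with `A(iω)` invertible,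
`ξ` is a singular value of `G(iω)` iff `λ = iω` is an eigenvalue of `L_ξ`. -/
theorem singular_value_iff_eig_Lxi [NeZero n] [NeZero nu] [NeZero ny] [NeZero m]
    (A0 : Matrix (Fin n) (Fin n) ℝ) (A : Fin m → Matrix (Fin n) (Fin n) ℝ)
    (B : Matrix (Fin n) (Fin nu) ℝ) (C : Matrix (Fin ny) (Fin n) ℝ)
    (D : Matrix (Fin ny) (Fin nu) ℝ) (τ : Fin m → ℝ) (hτ : ∀ i, 0 ≤ τ i)
    (ξ : ℝ) (hξ : 0 < ξ) (hD : IsUnit (Dxi D ξ))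
    (ω : ℝ) (hω : 0 ≤ ω) (hA : IsUnit (Amat A0 A τ (Complex.I * ω))) :
    ((Gmat A0 A B C D τ (Complex.I * ω))ᴴ * Gmat A0 A B C D τ (Complex.I * ω)
        - ((ξ : ℂ) ^ 2) • 1).det = 0
      ↔ IsEigLxi A0 A B C D τ ξ (Complex.I * ω) :=
  singular_value_iff_eig_Lxi_general A0 A B C D τ hτ ξ hξ hD ω hA
end
end

section
/- Let ξ > 0 be such that D_ξ := DᵀD − ξ²I is invertible. A number λ ∈ ℂ is an eigenvalue of the operator L_ξ (i.e. there exists a continuously differentiable function u : [−τ_max, τ_max] → ℂ^{2n}, not identically zero, with u′(t) = λu(t) on [−τ_max, τ_max] and u′(0) = M_0 u(0) + Σ_{i=1}^m (M_i u(−τ_i) + M_{−i} u(τ_i))) if and only if −conj(λ) is an eigenvalue of L_ξ in the same sense. -/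
open Matrix Complex

noncomputable section

variable {n nu ny m : ℕ}

namespace EigLxiAux

/-- The symplectic-type matrix `J`. -/
def Jmat (n : ℕ) : Matrix (Fin n ⊕ Fin n) (Fin n ⊕ Fin n) ℂ :=
  fromBlocks 0 1 (-1) 0

lemma Jmat_mul_fromBlocks (a b c d : Matrix (Fin n) (Fin n) ℂ) :
    Jmat n * fromBlocks a b c d * Jmat n = fromBlocks (-d) c b (-a) := by
  simp [Jmat, fromBlocks_multiply, Matrix.neg_mul, Matrix.mul_neg]

lemma Jmat_mul_Jmat : Jmat n * Jmat n = -1 := by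
  have h : (-1 : Matrix (Fin n ⊕ Fin n) (Fin n ⊕ Fin n) ℂ) = fromBlocks (-1) (-0) (-0) (-1) := by
    rw [← fromBlocks_neg, fromBlocks_one]
  simp [Jmat, fromBlocks_multiply, h]

lemma realmap_neg {α β : Type*} (X : Matrix α β ℝ) :
    (-X).map (Complex.ofReal) = -(X.map Complex.ofReal) := by
  ext i j; simp

lemma sum_mulVec {ι p q : Type*} [Fintype q] (s : Finset ι) (M : ι → Matrix p q ℂ)
    (v : q → ℂ) : (∑ i ∈ s, M i) *ᵥ v = ∑ i ∈ s, M i *ᵥ v := by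
  ext j
  simp only [Matrix.mulVec, dotProduct, Matrix.sum_apply, Finset.sum_apply, Finset.sum_mul]
  exact Finset.sum_comm

lemma ode_unique {E : Type*} [NormedAddCommGroup E] [NormedSpace ℂ E] {u : ℝ → E} {lam : ℂ}
    {a b : ℝ} (ha : a ≤ 0) (hb : 0 ≤ b)
    (hu : ∀ t ∈ Set.Icc a b, HasDerivWithinAt u (lam • u t) (Set.Icc a b) t) :
    ∀ t ∈ Set.Icc a b, u t = Complex.exp (lam * t) • u 0 := by
  have h0 : (0:ℝ) ∈ Set.Icc a b := ⟨ha, hb⟩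
  have hc : ∀ t : ℝ, HasDerivAt (fun t : ℝ => Complex.exp (-lam * t))
      (Complex.exp (-lam * t) * (-lam)) t := by
    intro t
    have h1 : HasDerivAt (fun z : ℂ => Complex.exp (-lam * z))
        (Complex.exp (-lam * t) * (-lam)) (t : ℂ) := by
      simpa using ((hasDerivAt_id (t : ℂ)).const_mul (-lam)).cexp
    exact h1.comp_ofReal
  have hgderiv : ∀ t ∈ Set.Icc a b,
      HasDerivWithinAt (fun t : ℝ => Complex.exp (-lam * t) • u t) 0 (Set.Icc a b) t := by
    intro t ht
    have h2 := ((hc t).hasDerivWithinAt).smul (hu t ht)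
    have e0 : Complex.exp (-lam * t) • (lam • u t) + (Complex.exp (-lam * t) * (-lam)) • u t
        = 0 := by
      rw [smul_smul, ← add_smul]
      have h5 : Complex.exp (-lam * t) * lam + Complex.exp (-lam * t) * (-lam) = 0 := by ring
      rw [h5, zero_smul]
    rwa [e0] at h2
  have hconst : ∀ t ∈ Set.Icc a b,
      Complex.exp (-lam * t) • u t = Complex.exp (-lam * (0:ℝ)) • u 0 := by
    intro t ht
    have h3 := Convex.norm_image_sub_le_of_norm_hasDerivWithin_le (C := 0)
      (f' := fun _ => (0:E)) hgderiv (fun x _ => by simp) (convex_Icc a b) h0 ht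
    have h4 : Complex.exp (-lam * t) • u t - Complex.exp (-lam * (0:ℝ)) • u 0 = 0 := by
      rw [← norm_le_zero_iff]
      simpa using h3
    exact sub_eq_zero.mp h4
  intro t ht
  have h2 : Complex.exp (-lam * t) • u t = u 0 := by
    simpa using hconst t ht
  calc u t = Complex.exp (lam * t) • Complex.exp (-lam * t) • u t := by
        rw [smul_smul, ← Complex.exp_add]
        have h6 : lam * t + -lam * t = 0 := by ring
        rw [h6, Complex.exp_zero, one_smul]
    _ = Complex.exp (lam * t) • u 0 := by rw [h2]

variable [NeZero n] [NeZero m]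

lemma Hxi_mulVec (A0 : Matrix (Fin n) (Fin n) ℝ) (A : Fin m → Matrix (Fin n) (Fin n) ℝ)
    (B : Matrix (Fin n) (Fin nu) ℝ) (C : Matrix (Fin ny) (Fin n) ℝ)
    (D : Matrix (Fin ny) (Fin nu) ℝ) (τ : Fin m → ℝ) (ξ : ℝ) (lam : ℂ)
    (v : Fin n ⊕ Fin n → ℂ) :
    Hxi A0 A B C D τ ξ lam *ᵥ v
      = lam • v - (Mzero A0 B C D ξ).map Complex.ofReal *ᵥ v
        - ∑ i : Fin m, (Complex.exp (-lam * (τ i : ℂ)) • ((Mpos (A i)).map Complex.ofReal *ᵥ v)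
            + Complex.exp (lam * (τ i : ℂ)) • ((Mneg (A i)).map Complex.ofReal *ᵥ v)) := by
  rw [Hxi, Matrix.sub_mulVec, Matrix.sub_mulVec, sum_mulVec]
  simp only [Matrix.add_mulVec, Matrix.smul_mulVec, Matrix.one_mulVec]

lemma tauMax_nonneg (τ : Fin m → ℝ) (hτ : ∀ i, 0 ≤ τ i) : 0 ≤ tauMax τ :=
  le_trans (hτ ⟨0, Nat.pos_of_ne_zero (NeZero.ne m)⟩)
    (Finset.le_sup' τ (Finset.mem_univ _))

lemma isEig_iff_det (A0 : Matrix (Fin n) (Fin n) ℝ) (A : Fin m → Matrix (Fin n) (Fin n) ℝ)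
    (B : Matrix (Fin n) (Fin nu) ℝ) (C : Matrix (Fin ny) (Fin n) ℝ)
    (D : Matrix (Fin ny) (Fin nu) ℝ) (τ : Fin m → ℝ) (hτ : ∀ i, 0 ≤ τ i)
    (ξ : ℝ) (lam : ℂ) :
    IsEigLxi A0 A B C D τ ξ lam ↔ (Hxi A0 A B C D τ ξ lam).det = 0 := by
  have h0max : 0 ≤ tauMax τ := tauMax_nonneg τ hτ
  have h0mem : (0:ℝ) ∈ Set.Icc (-(tauMax τ)) (tauMax τ) := ⟨neg_nonpos.mpr h0max, h0max⟩
  have hτmem : ∀ i, τ i ∈ Set.Icc (-(tauMax τ)) (tauMax τ) := fun i =>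
    ⟨le_trans (neg_nonpos.mpr h0max) (hτ i), Finset.le_sup' τ (Finset.mem_univ i)⟩
  have hτmem' : ∀ i, -(τ i) ∈ Set.Icc (-(tauMax τ)) (tauMax τ) := fun i =>
    ⟨neg_le_neg (hτmem i).2, le_trans (neg_nonpos.mpr (hτ i)) h0max⟩
  rw [← Matrix.exists_mulVec_eq_zero_iff]
  constructor
  · rintro ⟨u, hderiv, ⟨t0, ht0, hne⟩, heq⟩
    have key := ode_unique (neg_nonpos.mpr h0max) h0max hderiv
    have hu0 : u 0 ≠ 0 := by
      intro h
      exact hne (by rw [key t0 ht0, h, smul_zero])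
    refine ⟨u 0, hu0, ?_⟩
    rw [Hxi_mulVec]
    have heq' : lam • u 0 = (Mzero A0 B C D ξ).map Complex.ofReal *ᵥ u 0
        + ∑ i : Fin m, (Complex.exp (-lam * (τ i : ℂ)) • ((Mpos (A i)).map Complex.ofReal *ᵥ u 0)
            + Complex.exp (lam * (τ i : ℂ)) • ((Mneg (A i)).map Complex.ofReal *ᵥ u 0)) := by
      rw [heq]
      congr 1
      refine Finset.sum_congr rfl fun i _ => ?_
      have e1 : u (τ i) = Complex.exp (lam * (τ i : ℂ)) • u 0 := key _ (hτmem i)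
      have e2 : u (-(τ i)) = Complex.exp (-lam * (τ i : ℂ)) • u 0 := by
        rw [key _ (hτmem' i)]
        congr 1
        push_cast
        ring
      rw [e1, e2, Matrix.mulVec_smul, Matrix.mulVec_smul]
    rw [sub_sub, sub_eq_zero, heq']
  · rintro ⟨v, hv, hv0⟩
    rw [Hxi_mulVec, sub_sub, sub_eq_zero] at hv0
    refine ⟨fun t => Complex.exp (lam * t) • v, ?_, ⟨0, h0mem, ?_⟩, ?_⟩
    · intro t ht
      have hc : HasDerivAt (fun t : ℝ => Complex.exp (lam * t))
          (Complex.exp (lam * t) * lam) t := by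
        have h1 : HasDerivAt (fun z : ℂ => Complex.exp (lam * z))
            (Complex.exp (lam * t) * lam) (t : ℂ) := by
          simpa using ((hasDerivAt_id (t : ℂ)).const_mul lam).cexp
        exact h1.comp_ofReal
      have h2 := (hc.smul_const v).hasDerivWithinAt (s := Set.Icc (-(tauMax τ)) (tauMax τ))
      have e0 : (Complex.exp (lam * t) * lam) • v = lam • Complex.exp (lam * t) • v := by
        rw [smul_smul, mul_comm]
      rwa [e0] at h2
    · simp only [Complex.ofReal_zero, mul_zero, Complex.exp_zero, one_smul]
      exact hv
    · have hneg : ∀ i : Fin m, Complex.exp (lam * ((-(τ i) : ℝ) : ℂ))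
          = Complex.exp (-lam * (τ i : ℂ)) := by
        intro i; congr 1; push_cast; ring
      simp only [Complex.ofReal_zero, mul_zero, Complex.exp_zero, one_smul, hneg,
        Matrix.mulVec_smul]
      exact hv0


section ConjPart

lemma Dxi_inv_symm (D : Matrix (Fin ny) (Fin nu) ℝ) (ξ : ℝ) :
    ((Dxi D ξ)⁻¹)ᵀ = (Dxi D ξ)⁻¹ := by
  have ht : (Dxi D ξ)ᵀ = Dxi D ξ := by
    simp [Dxi, transpose_sub, transpose_mul, transpose_smul, transpose_one, transpose_transpose]
  rw [Matrix.transpose_nonsing_inv, ht]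


lemma DxiT_inv_symm (D : Matrix (Fin ny) (Fin nu) ℝ) (ξ : ℝ) :
    ((DxiT D ξ)⁻¹)ᵀ = (DxiT D ξ)⁻¹ := by
  have ht : (DxiT D ξ)ᵀ = DxiT D ξ := by
    simp [DxiT, transpose_sub, transpose_mul, transpose_smul, transpose_one, transpose_transpose]
  rw [Matrix.transpose_nonsing_inv, ht]

example (A0 : Matrix (Fin n) (Fin n) ℝ) (B : Matrix (Fin n) (Fin nu) ℝ)
    (C : Matrix (Fin ny) (Fin n) ℝ) (D : Matrix (Fin ny) (Fin nu) ℝ) (ξ : ℝ) :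
    (-A0ᵀ + Cᵀ * D * (Dxi D ξ)⁻¹ * Bᵀ)ᵀ = -(A0 - B * (Dxi D ξ)⁻¹ * Dᵀ * C) := by
  simp [transpose_add, transpose_neg, transpose_mul, transpose_transpose, Dxi_inv_symm,
    Matrix.mul_assoc, sub_eq_add_neg, neg_add, add_comm]

example (B : Matrix (Fin n) (Fin nu) ℝ) (D : Matrix (Fin ny) (Fin nu) ℝ) (ξ : ℝ) :
    (-(B * (Dxi D ξ)⁻¹ * Bᵀ))ᵀ = -(B * (Dxi D ξ)⁻¹ * Bᵀ) := by
  simp [transpose_neg, transpose_mul, transpose_transpose, Dxi_inv_symm, Matrix.mul_assoc]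

example (C : Matrix (Fin ny) (Fin n) ℝ) (D : Matrix (Fin ny) (Fin nu) ℝ) (ξ : ℝ) :
    (ξ ^ 2 • (Cᵀ * (DxiT D ξ)⁻¹ * C))ᵀ = ξ ^ 2 • (Cᵀ * (DxiT D ξ)⁻¹ * C) := by
  simp [transpose_smul, transpose_mul, transpose_transpose, DxiT_inv_symm, Matrix.mul_assoc]


lemma J_M0 (A0 : Matrix (Fin n) (Fin n) ℝ) (B : Matrix (Fin n) (Fin nu) ℝ)
    (C : Matrix (Fin ny) (Fin n) ℝ) (D : Matrix (Fin ny) (Fin nu) ℝ) (ξ : ℝ) :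
    Jmat n * ((Mzero A0 B C D ξ).map Complex.ofReal)ᵀ * Jmat n
      = (Mzero A0 B C D ξ).map Complex.ofReal := by
  have hS : (-A0ᵀ + Cᵀ * D * (Dxi D ξ)⁻¹ * Bᵀ)ᵀ = -(A0 - B * (Dxi D ξ)⁻¹ * Dᵀ * C) := by
    simp [transpose_add, transpose_neg, transpose_mul, transpose_transpose, Dxi_inv_symm,
      Matrix.mul_assoc, sub_eq_add_neg, neg_add, add_comm]
  have hQ : (-(B * (Dxi D ξ)⁻¹ * Bᵀ))ᵀ = -(B * (Dxi D ξ)⁻¹ * Bᵀ) := by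
    simp [transpose_neg, transpose_mul, transpose_transpose, Dxi_inv_symm, Matrix.mul_assoc]
  have hR : (ξ ^ 2 • (Cᵀ * (DxiT D ξ)⁻¹ * C))ᵀ = ξ ^ 2 • (Cᵀ * (DxiT D ξ)⁻¹ * C) := by
    simp [transpose_smul, transpose_mul, transpose_transpose, DxiT_inv_symm, Matrix.mul_assoc]
  have hP : (A0 - B * (Dxi D ξ)⁻¹ * Dᵀ * C)ᵀ = -(-A0ᵀ + Cᵀ * D * (Dxi D ξ)⁻¹ * Bᵀ) := by
    have h := congrArg Matrix.transpose hS
    rw [transpose_transpose, transpose_neg] at h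
    rw [h, neg_neg]
  have hS' : ((-A0ᵀ + Cᵀ * D * (Dxi D ξ)⁻¹ * Bᵀ).map Complex.ofReal)ᵀ
      = -((A0 - B * (Dxi D ξ)⁻¹ * Dᵀ * C).map Complex.ofReal) := by
    rw [← Matrix.transpose_map, hS, realmap_neg]
  have hQ' : ((-(B * (Dxi D ξ)⁻¹ * Bᵀ)).map Complex.ofReal)ᵀ
      = (-(B * (Dxi D ξ)⁻¹ * Bᵀ)).map Complex.ofReal := by
    rw [← Matrix.transpose_map, hQ]
  have hR' : ((ξ ^ 2 • (Cᵀ * (DxiT D ξ)⁻¹ * C)).map Complex.ofReal)ᵀ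
      = (ξ ^ 2 • (Cᵀ * (DxiT D ξ)⁻¹ * C)).map Complex.ofReal := by
    rw [← Matrix.transpose_map, hR]
  have hP' : ((A0 - B * (Dxi D ξ)⁻¹ * Dᵀ * C).map Complex.ofReal)ᵀ
      = -((-A0ᵀ + Cᵀ * D * (Dxi D ξ)⁻¹ * Bᵀ).map Complex.ofReal) := by
    rw [← Matrix.transpose_map, hP, realmap_neg]
  rw [Mzero, fromBlocks_map, fromBlocks_transpose, Jmat_mul_fromBlocks, hS', hQ', hR', hP',
    neg_neg, neg_neg]


lemma J_Mpos (Ai : Matrix (Fin n) (Fin n) ℝ) :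
    Jmat n * ((Mpos Ai).map Complex.ofReal)ᵀ * Jmat n = (Mneg Ai).map Complex.ofReal := by
  have e : (-Aiᵀ).map Complex.ofReal = -((Ai.map Complex.ofReal)ᵀ) := by
    rw [realmap_neg, Matrix.transpose_map]
  rw [Mpos, Mneg, fromBlocks_map, fromBlocks_transpose, Jmat_mul_fromBlocks, fromBlocks_map, e]
  simp


lemma J_Mneg (Ai : Matrix (Fin n) (Fin n) ℝ) :
    Jmat n * ((Mneg Ai).map Complex.ofReal)ᵀ * Jmat n = (Mpos Ai).map Complex.ofReal := by
  have e : (((-Aiᵀ).map Complex.ofReal)ᵀ) = -(Ai.map Complex.ofReal) := by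
    rw [realmap_neg, transpose_neg, Matrix.transpose_map, transpose_transpose]
  rw [Mpos, Mneg, fromBlocks_map, fromBlocks_transpose, Jmat_mul_fromBlocks, fromBlocks_map, e]
  simp


lemma Hxi_map_conj (A0 : Matrix (Fin n) (Fin n) ℝ) (A : Fin m → Matrix (Fin n) (Fin n) ℝ)
    (B : Matrix (Fin n) (Fin nu) ℝ) (C : Matrix (Fin ny) (Fin n) ℝ)
    (D : Matrix (Fin ny) (Fin nu) ℝ) (τ : Fin m → ℝ) (ξ : ℝ) (lam : ℂ) :
    (Hxi A0 A B C D τ ξ lam).map (starRingEnd ℂ)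
      = (starRingEnd ℂ) lam • (1 : Matrix (Fin n ⊕ Fin n) (Fin n ⊕ Fin n) ℂ)
        - (Mzero A0 B C D ξ).map Complex.ofReal
        - ∑ i : Fin m,
            (Complex.exp (-(starRingEnd ℂ) lam * (τ i : ℂ)) • (Mpos (A i)).map Complex.ofReal
            + Complex.exp ((starRingEnd ℂ) lam * (τ i : ℂ)) • (Mneg (A i)).map Complex.ofReal) := by
  ext i j
  simp only [Hxi, Matrix.map_apply, Matrix.sub_apply, Matrix.smul_apply, Matrix.sum_apply,
    Matrix.add_apply, smul_eq_mul, _root_.map_sub, _root_.map_sum, _root_.map_add,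
    _root_.map_mul, Complex.conj_ofReal, Matrix.one_apply, apply_ite, _root_.map_one,
    _root_.map_zero, ← Complex.exp_conj, _root_.map_neg]


lemma Hxi_neg_conj (A0 : Matrix (Fin n) (Fin n) ℝ) (A : Fin m → Matrix (Fin n) (Fin n) ℝ)
    (B : Matrix (Fin n) (Fin nu) ℝ) (C : Matrix (Fin ny) (Fin n) ℝ)
    (D : Matrix (Fin ny) (Fin nu) ℝ) (τ : Fin m → ℝ) (ξ : ℝ) (lam : ℂ) :
    Hxi A0 A B C D τ ξ (-(starRingEnd ℂ) lam)
      = Jmat n * ((Hxi A0 A B C D τ ξ lam).map (starRingEnd ℂ))ᵀ * Jmat n := by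
  rw [Hxi_map_conj]
  rw [transpose_sub, transpose_sub, transpose_smul, transpose_one, Matrix.transpose_sum]
  simp only [transpose_add, transpose_smul]
  rw [Matrix.mul_sub, Matrix.mul_sub, Matrix.sub_mul, Matrix.sub_mul, Finset.mul_sum,
    Finset.sum_mul]
  simp only [Matrix.mul_add, Matrix.add_mul, mul_smul_comm, smul_mul_assoc, Matrix.mul_one,
    Jmat_mul_Jmat, J_M0, J_Mpos, J_Mneg]
  rw [Hxi]
  have h1 : (-(starRingEnd ℂ) lam) • (1 : Matrix (Fin n ⊕ Fin n) (Fin n ⊕ Fin n) ℂ)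
      = (starRingEnd ℂ) lam • (-1 : Matrix (Fin n ⊕ Fin n) (Fin n ⊕ Fin n) ℂ) := by
    rw [smul_neg, neg_smul]
  rw [h1]
  congr 1
  refine Finset.sum_congr rfl fun i _ => ?_
  rw [neg_neg, add_comm]

lemma det_Jmat_mul_det_Jmat : (Jmat n).det * (Jmat n).det = 1 := by
  rw [← Matrix.det_mul, Jmat_mul_Jmat, Matrix.det_neg, Matrix.det_one, mul_one]
  rw [Fintype.card_sum, Fintype.card_fin]
  exact Even.neg_one_pow ⟨n, rfl⟩

lemma det_Hxi_neg_conj (A0 : Matrix (Fin n) (Fin n) ℝ) (A : Fin m → Matrix (Fin n) (Fin n) ℝ)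
    (B : Matrix (Fin n) (Fin nu) ℝ) (C : Matrix (Fin ny) (Fin n) ℝ)
    (D : Matrix (Fin ny) (Fin nu) ℝ) (τ : Fin m → ℝ) (ξ : ℝ) (lam : ℂ) :
    (Hxi A0 A B C D τ ξ (-(starRingEnd ℂ) lam)).det
      = (starRingEnd ℂ) ((Hxi A0 A B C D τ ξ lam).det) := by
  rw [Hxi_neg_conj, Matrix.det_mul, Matrix.det_mul, Matrix.det_transpose,
    ← RingHom.mapMatrix_apply, ← RingHom.map_det, mul_comm, ← mul_assoc, det_Jmat_mul_det_Jmat, one_mul]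

end ConjPart

end EigLxiAux

/-- `λ` is an eigenvalue of `L_ξ` iff `−conj(λ)` is an eigenvalue of `L_ξ`. -/
theorem eig_Lxi_iff_eig_Lxi_neg_conj [NeZero n] [NeZero nu] [NeZero ny] [NeZero m]
    (A0 : Matrix (Fin n) (Fin n) ℝ) (A : Fin m → Matrix (Fin n) (Fin n) ℝ)
    (B : Matrix (Fin n) (Fin nu) ℝ) (C : Matrix (Fin ny) (Fin n) ℝ)
    (D : Matrix (Fin ny) (Fin nu) ℝ) (τ : Fin m → ℝ) (hτ : ∀ i, 0 ≤ τ i)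
    (ξ : ℝ) (hξ : 0 < ξ) (hD : IsUnit (Dxi D ξ)) (lam : ℂ) :
    IsEigLxi A0 A B C D τ ξ lam ↔ IsEigLxi A0 A B C D τ ξ (-(starRingEnd ℂ) lam) := by
  rw [EigLxiAux.isEig_iff_det A0 A B C D τ hτ ξ lam,
    EigLxiAux.isEig_iff_det A0 A B C D τ hτ ξ (-(starRingEnd ℂ) lam),
    EigLxiAux.det_Hxi_neg_conj]
  constructor
  · intro h; rw [h, map_zero]
  · intro h
    have h2 := congrArg (starRingEnd ℂ) h
    rwa [Complex.conj_conj, map_zero] at h2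
end
end

section
/- Let ξ > 0 be such that D_ξ := DᵀD − ξ²I is invertible. Then for every ω ∈ ℝ, the complex number det H_ξ(iω) is real, i.e. Im(det H_ξ(iω)) = 0. -/
open Matrix Complex

noncomputable section

variable {n nu ny m : ℕ}

def Jmat (n : ℕ) : Matrix (Fin n ⊕ Fin n) (Fin n ⊕ Fin n) ℝ :=
  fromBlocks 0 1 (-1) 0

lemma Dxi_transpose (D : Matrix (Fin ny) (Fin nu) ℝ) (ξ : ℝ) : (Dxi D ξ)ᵀ = Dxi D ξ := by
  simp [Dxi, transpose_sub, transpose_mul, transpose_smul]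

lemma DxiT_transpose (D : Matrix (Fin ny) (Fin nu) ℝ) (ξ : ℝ) : (DxiT D ξ)ᵀ = DxiT D ξ := by
  simp [DxiT, transpose_sub, transpose_mul, transpose_smul]

lemma J_Mzero (A0 : Matrix (Fin n) (Fin n) ℝ) (B : Matrix (Fin n) (Fin nu) ℝ)
    (C : Matrix (Fin ny) (Fin n) ℝ) (D : Matrix (Fin ny) (Fin nu) ℝ) (ξ : ℝ) :
    Jmat n * Mzero A0 B C D ξ = -(Mzero A0 B C D ξ)ᵀ * Jmat n := by
  rw [Mzero, Jmat, fromBlocks_transpose, fromBlocks_neg, fromBlocks_multiply, fromBlocks_multiply]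
  have h1 : ((Dxi D ξ)⁻¹)ᵀ = (Dxi D ξ)⁻¹ := by rw [transpose_nonsing_inv, Dxi_transpose]
  have h2 : ((DxiT D ξ)⁻¹)ᵀ = (DxiT D ξ)⁻¹ := by rw [transpose_nonsing_inv, DxiT_transpose]
  ext (i|i) (j|j) <;>
    simp [fromBlocks, transpose_add, transpose_sub, transpose_mul, transpose_smul, h1, h2, Matrix.mul_assoc] <;> ring

lemma J_Mpos (Ai : Matrix (Fin n) (Fin n) ℝ) : Jmat n * Mpos Ai = -(Mneg Ai)ᵀ * Jmat n := by
  rw [Mpos, Mneg, Jmat, fromBlocks_transpose, fromBlocks_neg, fromBlocks_multiply,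
    fromBlocks_multiply]
  ext (i|i) (j|j) <;> simp [fromBlocks]

lemma J_Mneg (Ai : Matrix (Fin n) (Fin n) ℝ) : Jmat n * Mneg Ai = -(Mpos Ai)ᵀ * Jmat n := by
  rw [Mpos, Mneg, Jmat, fromBlocks_transpose, fromBlocks_neg, fromBlocks_multiply,
    fromBlocks_multiply]
  ext (i|i) (j|j) <;> simp [fromBlocks]

lemma J_mul_J : Jmat n * Jmat n = -1 := by
  rw [Jmat, fromBlocks_multiply]
  ext (i|i) (j|j) <;> simp [fromBlocks, Matrix.one_apply]

noncomputable def Jc : Matrix (Fin n ⊕ Fin n) (Fin n ⊕ Fin n) ℂ := (Jmat n).map Complex.ofReal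

lemma map_ofReal_mul (M N : Matrix (Fin n ⊕ Fin n) (Fin n ⊕ Fin n) ℝ) :
    (M * N).map Complex.ofReal = M.map Complex.ofReal * N.map Complex.ofReal :=
  Matrix.map_mul (f := Complex.ofRealHom)

lemma map_ofReal_neg (M : Matrix (Fin n ⊕ Fin n) (Fin n ⊕ Fin n) ℝ) :
    (-M).map Complex.ofReal = -(M.map Complex.ofReal) := by
  ext i j; simp

lemma J_Hxi (A0 : Matrix (Fin n) (Fin n) ℝ) (A : Fin m → Matrix (Fin n) (Fin n) ℝ)
    (B : Matrix (Fin n) (Fin nu) ℝ) (C : Matrix (Fin ny) (Fin n) ℝ)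
    (D : Matrix (Fin ny) (Fin nu) ℝ) (τ : Fin m → ℝ) (ξ : ℝ) (lam : ℂ) :
    Jc * Hxi A0 A B C D τ ξ (-lam) = -(Hxi A0 A B C D τ ξ lam)ᵀ * Jc := by
  have key : ∀ M M' : Matrix (Fin n ⊕ Fin n) (Fin n ⊕ Fin n) ℝ,
      Jmat n * M = -M'ᵀ * Jmat n →
      Jc * M.map Complex.ofReal = -(M'.map Complex.ofReal)ᵀ * Jc := by
    intro M M' h
    have := congrArg (fun X => X.map Complex.ofReal) h
    simpa [Jc, map_ofReal_mul, Matrix.transpose_map, neg_mul, map_ofReal_neg] using this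
  have hM0 := key _ _ (J_Mzero A0 B C D ξ)
  have hMp := fun i => key _ _ (J_Mpos (A i))
  have hMn := fun i => key _ _ (J_Mneg (A i))
  have h1 : Jc * ((-lam) • (1 : Matrix (Fin n ⊕ Fin n) (Fin n ⊕ Fin n) ℂ))
      = -(lam • (1 : Matrix (Fin n ⊕ Fin n) (Fin n ⊕ Fin n) ℂ))ᵀ * Jc := by
    simp [mul_smul_comm, Matrix.smul_mul, smul_neg]
  have hsum : Jc * (∑ i : Fin m,
        (Complex.exp (-(-lam) * (τ i : ℂ)) • (Mpos (A i)).map Complex.ofReal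
          + Complex.exp (-lam * (τ i : ℂ)) • (Mneg (A i)).map Complex.ofReal))
      = -(∑ i : Fin m,
        (Complex.exp (-lam * (τ i : ℂ)) • (Mpos (A i)).map Complex.ofReal
          + Complex.exp (lam * (τ i : ℂ)) • (Mneg (A i)).map Complex.ofReal))ᵀ * Jc := by
    rw [Matrix.mul_sum, Matrix.transpose_sum]
    rw [show -(∑ i : Fin m,
        ((Complex.exp (-lam * (τ i : ℂ)) • (Mpos (A i)).map Complex.ofReal
          + Complex.exp (lam * (τ i : ℂ)) • (Mneg (A i)).map Complex.ofReal))ᵀ)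
        = ∑ i : Fin m, -((Complex.exp (-lam * (τ i : ℂ)) • (Mpos (A i)).map Complex.ofReal
          + Complex.exp (lam * (τ i : ℂ)) • (Mneg (A i)).map Complex.ofReal))ᵀ from by
        rw [Finset.sum_neg_distrib], Finset.sum_mul]
    refine Finset.sum_congr rfl fun i _ => ?_
    rw [Matrix.mul_add, mul_smul_comm, mul_smul_comm, hMp i, hMn i]
    simp only [transpose_add, transpose_smul, neg_add, Matrix.add_mul, Matrix.smul_mul,
      neg_mul, smul_neg, neg_neg]
    abel
  rw [Hxi, Hxi]
  rw [Matrix.mul_sub, Matrix.mul_sub, h1, hM0, hsum]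
  simp only [transpose_sub, Matrix.sub_mul, neg_sub, neg_mul]
  abel

lemma Jc_det_mul_self : (Jc (n := n)).det * (Jc (n := n)).det = 1 := by
  have h : Jc (n := n) * Jc = -1 := by
    have := congrArg (fun X => X.map Complex.ofReal) (J_mul_J (n := n))
    simpa [Jc, map_ofReal_mul, map_ofReal_neg, Matrix.map_one Complex.ofReal
      Complex.ofReal_zero Complex.ofReal_one] using this
  have := congrArg Matrix.det h
  rw [Matrix.det_mul, Matrix.det_neg, Matrix.det_one] at this
  simpa [Fintype.card_sum, Even.neg_one_pow (Even.add_self n)] using this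

lemma Jc_det_ne_zero : (Jc (n := n)).det ≠ 0 := by
  intro h
  have := Jc_det_mul_self (n := n)
  rw [h] at this; simp at this

lemma det_Hxi_neg (A0 : Matrix (Fin n) (Fin n) ℝ) (A : Fin m → Matrix (Fin n) (Fin n) ℝ)
    (B : Matrix (Fin n) (Fin nu) ℝ) (C : Matrix (Fin ny) (Fin n) ℝ)
    (D : Matrix (Fin ny) (Fin nu) ℝ) (τ : Fin m → ℝ) (ξ : ℝ) (lam : ℂ) :
    (Hxi A0 A B C D τ ξ (-lam)).det = (Hxi A0 A B C D τ ξ lam).det := by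
  have h := congrArg Matrix.det (J_Hxi A0 A B C D τ ξ lam)
  rw [Matrix.det_mul, Matrix.det_mul, Matrix.det_neg, Matrix.det_transpose] at h
  rw [Fintype.card_sum, Fintype.card_fin, Even.neg_one_pow (Even.add_self n), one_mul] at h
  have := mul_left_cancel₀ (Jc_det_ne_zero (n := n)) (h.trans (mul_comm _ _))
  exact this

lemma Hxi_conj (A0 : Matrix (Fin n) (Fin n) ℝ) (A : Fin m → Matrix (Fin n) (Fin n) ℝ)
    (B : Matrix (Fin n) (Fin nu) ℝ) (C : Matrix (Fin ny) (Fin n) ℝ)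
    (D : Matrix (Fin ny) (Fin nu) ℝ) (τ : Fin m → ℝ) (ξ : ℝ) (lam : ℂ) :
    (Hxi A0 A B C D τ ξ lam).map (starRingEnd ℂ) = Hxi A0 A B C D τ ξ (starRingEnd ℂ lam) := by
  ext i j
  simp only [Hxi, Matrix.map_apply, Matrix.sub_apply, Matrix.smul_apply, Matrix.sum_apply,
    Matrix.add_apply, Matrix.one_apply, smul_eq_mul, map_sub, map_sum, map_add, _root_.map_mul,
    ← Complex.exp_conj, Complex.conj_ofReal, map_neg, apply_ite (starRingEnd ℂ), _root_.map_one,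
    map_zero]


/-- for every `ω ∈ ℝ`, `det H_ξ(iω)` is real. -/
theorem det_Hxi_on_imaginary_axis_real [NeZero n] [NeZero nu] [NeZero ny] [NeZero m]
    (A0 : Matrix (Fin n) (Fin n) ℝ) (A : Fin m → Matrix (Fin n) (Fin n) ℝ)
    (B : Matrix (Fin n) (Fin nu) ℝ) (C : Matrix (Fin ny) (Fin n) ℝ)
    (D : Matrix (Fin ny) (Fin nu) ℝ) (τ : Fin m → ℝ)
    (ξ : ℝ) (hξ : 0 < ξ) (hD : IsUnit (Dxi D ξ)) :
    ∀ ω : ℝ, ((Hxi A0 A B C D τ ξ (Complex.I * ω)).det).im = 0 := by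
  intro ω
  rw [← Complex.conj_eq_iff_im]
  have h1 : (starRingEnd ℂ) (Hxi A0 A B C D τ ξ (Complex.I * ω)).det
      = ((Hxi A0 A B C D τ ξ (Complex.I * ω)).map (starRingEnd ℂ)).det :=
    RingHom.map_det (starRingEnd ℂ) _
  rw [h1, Hxi_conj]
  have h2 : (starRingEnd ℂ) (Complex.I * ω) = -(Complex.I * ω) := by
    simp [Complex.conj_ofReal]
  rw [h2, det_Hxi_neg]
end
end

section
/- Let ξ > 0 be such that D_ξ := DᵀD − ξ²I is invertible, and let h_ξ : ℂ → ℂ be the entire function h_ξ(λ) := det H_ξ(λ). Then for every ω ∈ ℝ, the complex derivative h_ξ′(iω) is purely imaginary, i.e. Re(h_ξ′(iω)) = 0. -/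
open Matrix Complex

noncomputable section

variable {n nu ny m : ℕ}

namespace HxiAux

/-- the symplectic-type involution matrix -/
def Jm (n : ℕ) : Matrix (Fin n ⊕ Fin n) (Fin n ⊕ Fin n) ℝ :=
  fromBlocks 0 1 (-1) 0

lemma Jm_mul_Jm : Jm n * Jm n = -1 := by
  have h : (-1 : Matrix (Fin n ⊕ Fin n) (Fin n ⊕ Fin n) ℝ) = fromBlocks (-1) (-0) (-0) (-1) := by
    rw [← fromBlocks_neg, Matrix.fromBlocks_one]
  rw [h]
  simp [Jm, fromBlocks_multiply]

lemma Jm_conj (a b c d : Matrix (Fin n) (Fin n) ℝ) :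
    Jm n * (fromBlocks a b c d)ᵀ * Jm n = fromBlocks (-dᵀ) bᵀ cᵀ (-aᵀ) := by
  simp [Jm, fromBlocks_transpose, fromBlocks_multiply, Matrix.neg_mul, Matrix.mul_neg]

lemma Dxi_transpose (D : Matrix (Fin ny) (Fin nu) ℝ) (ξ : ℝ) : (Dxi D ξ)ᵀ = Dxi D ξ := by
  simp [Dxi, Matrix.transpose_sub, Matrix.transpose_mul, Matrix.transpose_smul]

lemma Dxi_inv_transpose (D : Matrix (Fin ny) (Fin nu) ℝ) (ξ : ℝ) :
    ((Dxi D ξ)⁻¹)ᵀ = (Dxi D ξ)⁻¹ := by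
  rw [Matrix.transpose_nonsing_inv, Dxi_transpose]

lemma DxiT_transpose (D : Matrix (Fin ny) (Fin nu) ℝ) (ξ : ℝ) : (DxiT D ξ)ᵀ = DxiT D ξ := by
  simp [DxiT, Matrix.transpose_sub, Matrix.transpose_mul, Matrix.transpose_smul]

lemma DxiT_inv_transpose (D : Matrix (Fin ny) (Fin nu) ℝ) (ξ : ℝ) :
    ((DxiT D ξ)⁻¹)ᵀ = (DxiT D ξ)⁻¹ := by
  rw [Matrix.transpose_nonsing_inv, DxiT_transpose]

lemma Jm_Mzero (A0 : Matrix (Fin n) (Fin n) ℝ) (B : Matrix (Fin n) (Fin nu) ℝ)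
    (C : Matrix (Fin ny) (Fin n) ℝ) (D : Matrix (Fin ny) (Fin nu) ℝ) (ξ : ℝ) :
    Jm n * (Mzero A0 B C D ξ)ᵀ * Jm n = Mzero A0 B C D ξ := by
  rw [Mzero, Jm_conj]
  have h1 : -(-A0ᵀ + Cᵀ * D * (Dxi D ξ)⁻¹ * Bᵀ)ᵀ = A0 - B * (Dxi D ξ)⁻¹ * Dᵀ * C := by
    simp [Matrix.transpose_add, Matrix.transpose_neg, Matrix.transpose_mul,
      Dxi_inv_transpose, Matrix.transpose_transpose, Matrix.mul_assoc, sub_eq_add_neg,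
      add_comm]
  have h2 : (-(B * (Dxi D ξ)⁻¹ * Bᵀ))ᵀ = -(B * (Dxi D ξ)⁻¹ * Bᵀ) := by
    simp [Matrix.transpose_neg, Matrix.transpose_mul, Dxi_inv_transpose,
      Matrix.transpose_transpose, Matrix.mul_assoc]
  have h3 : (ξ ^ 2 • (Cᵀ * (DxiT D ξ)⁻¹ * C))ᵀ = ξ ^ 2 • (Cᵀ * (DxiT D ξ)⁻¹ * C) := by
    simp [Matrix.transpose_smul, Matrix.transpose_mul, DxiT_inv_transpose,
      Matrix.transpose_transpose, Matrix.mul_assoc]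
  have h4 : -(A0 - B * (Dxi D ξ)⁻¹ * Dᵀ * C)ᵀ = -A0ᵀ + Cᵀ * D * (Dxi D ξ)⁻¹ * Bᵀ := by
    simp [Matrix.transpose_sub, Matrix.transpose_mul, Dxi_inv_transpose,
      Matrix.transpose_transpose, Matrix.mul_assoc, sub_eq_add_neg, add_comm]
  rw [h1, h2, h3, h4]

lemma Jm_Mpos (Ai : Matrix (Fin n) (Fin n) ℝ) :
    Jm n * (Mpos Ai)ᵀ * Jm n = Mneg Ai := by
  rw [Mpos, Jm_conj, Mneg]; simp

lemma Jm_Mneg (Ai : Matrix (Fin n) (Fin n) ℝ) :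
    Jm n * (Mneg Ai)ᵀ * Jm n = Mpos Ai := by
  rw [Mneg, Jm_conj, Mpos]; simp

/-- complex version of `Jm` -/
def Jc (n : ℕ) : Matrix (Fin n ⊕ Fin n) (Fin n ⊕ Fin n) ℂ :=
  (Jm n).map Complex.ofReal

lemma mapC_mul {k l o : Type*} [Fintype l] (X : Matrix k l ℝ) (Y : Matrix l o ℝ) :
    (X * Y).map Complex.ofReal = X.map Complex.ofReal * Y.map Complex.ofReal :=
  Matrix.map_mul (f := Complex.ofRealHom)

lemma Jc_mul_Jc : Jc n * Jc n = -1 := by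
  rw [Jc, ← mapC_mul, Jm_mul_Jm]
  ext i j
  simp [Matrix.map_apply, Matrix.one_apply, apply_ite Complex.ofReal]

lemma Jc_conj_map (M : Matrix (Fin n ⊕ Fin n) (Fin n ⊕ Fin n) ℝ) :
    Jc n * (M.map Complex.ofReal)ᵀ * Jc n = (Jm n * Mᵀ * Jm n).map Complex.ofReal := by
  rw [mapC_mul, mapC_mul, Jc, Matrix.transpose_map]

lemma Hxi_neg (A0 : Matrix (Fin n) (Fin n) ℝ) (A : Fin m → Matrix (Fin n) (Fin n) ℝ)
    (B : Matrix (Fin n) (Fin nu) ℝ) (C : Matrix (Fin ny) (Fin n) ℝ)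
    (D : Matrix (Fin ny) (Fin nu) ℝ) (τ : Fin m → ℝ) (ξ : ℝ) (lam : ℂ) :
    Hxi A0 A B C D τ ξ (-lam) = Jc n * (Hxi A0 A B C D τ ξ lam)ᵀ * Jc n := by
  rw [Hxi, Hxi]
  rw [Matrix.transpose_sub, Matrix.transpose_sub, Matrix.transpose_smul,
    Matrix.transpose_one, Matrix.transpose_sum]
  simp only [Matrix.transpose_add, Matrix.transpose_smul]
  rw [Matrix.mul_sub, Matrix.mul_sub, Matrix.sub_mul, Matrix.sub_mul,
    Matrix.mul_sum, Matrix.sum_mul]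
  simp only [Matrix.mul_add, Matrix.add_mul, Matrix.mul_smul, Matrix.smul_mul]
  simp only [Jc_conj_map, Jm_Mzero, Jm_Mpos, Jm_Mneg]
  rw [Matrix.mul_one, Jc_mul_Jc]
  rw [smul_neg, ← neg_smul, neg_neg]
  congr 1
  apply Finset.sum_congr rfl
  intro i _
  rw [add_comm]

lemma det_Hxi_neg (A0 : Matrix (Fin n) (Fin n) ℝ) (A : Fin m → Matrix (Fin n) (Fin n) ℝ)
    (B : Matrix (Fin n) (Fin nu) ℝ) (C : Matrix (Fin ny) (Fin n) ℝ)
    (D : Matrix (Fin ny) (Fin nu) ℝ) (τ : Fin m → ℝ) (ξ : ℝ) (lam : ℂ) :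
    (Hxi A0 A B C D τ ξ (-lam)).det = (Hxi A0 A B C D τ ξ lam).det := by
  have hJ : (Jc n).det * (Jc n).det = 1 := by
    rw [← Matrix.det_mul, Jc_mul_Jc]
    have h1 : (-1 : Matrix (Fin n ⊕ Fin n) (Fin n ⊕ Fin n) ℂ) = -(1 : Matrix _ _ ℂ) := rfl
    rw [h1, Matrix.det_neg, Matrix.det_one, mul_one]
    have : Even (Fintype.card (Fin n ⊕ Fin n)) := by
      simp only [Fintype.card_sum, Fintype.card_fin]
      exact ⟨n, rfl⟩
    exact this.neg_one_pow
  rw [Hxi_neg, Matrix.det_mul, Matrix.det_mul, Matrix.det_transpose]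
  rw [mul_comm ((Jc n).det), mul_assoc, hJ, mul_one]

lemma Hxi_conj (A0 : Matrix (Fin n) (Fin n) ℝ) (A : Fin m → Matrix (Fin n) (Fin n) ℝ)
    (B : Matrix (Fin n) (Fin nu) ℝ) (C : Matrix (Fin ny) (Fin n) ℝ)
    (D : Matrix (Fin ny) (Fin nu) ℝ) (τ : Fin m → ℝ) (ξ : ℝ) (lam : ℂ) :
    Hxi A0 A B C D τ ξ ((starRingEnd ℂ) lam) = (Hxi A0 A B C D τ ξ lam).map (starRingEnd ℂ) := by
  ext i j
  simp [Hxi, Matrix.sub_apply, Matrix.smul_apply, Matrix.sum_apply, Matrix.add_apply,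
    Matrix.map_apply, Matrix.one_apply, apply_ite (starRingEnd ℂ), map_sum, map_sub,
    ← Complex.exp_conj, _root_.map_mul, map_neg, Complex.conj_ofReal, smul_eq_mul]

lemma det_Hxi_conj (A0 : Matrix (Fin n) (Fin n) ℝ) (A : Fin m → Matrix (Fin n) (Fin n) ℝ)
    (B : Matrix (Fin n) (Fin nu) ℝ) (C : Matrix (Fin ny) (Fin n) ℝ)
    (D : Matrix (Fin ny) (Fin nu) ℝ) (τ : Fin m → ℝ) (ξ : ℝ) (lam : ℂ) :
    (Hxi A0 A B C D τ ξ ((starRingEnd ℂ) lam)).det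
      = (starRingEnd ℂ) ((Hxi A0 A B C D τ ξ lam).det) := by
  rw [Hxi_conj]
  rw [RingHom.map_det]
  rfl

lemma im_det_Hxi (A0 : Matrix (Fin n) (Fin n) ℝ) (A : Fin m → Matrix (Fin n) (Fin n) ℝ)
    (B : Matrix (Fin n) (Fin nu) ℝ) (C : Matrix (Fin ny) (Fin n) ℝ)
    (D : Matrix (Fin ny) (Fin nu) ℝ) (τ : Fin m → ℝ) (ξ : ℝ) (ω : ℝ) :
    ((Hxi A0 A B C D τ ξ (Complex.I * ω)).det).im = 0 := by
  rw [← Complex.conj_eq_iff_im]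
  have h2 : (starRingEnd ℂ) (Complex.I * ω) = -(Complex.I * ω) := by
    rw [_root_.map_mul, Complex.conj_I, Complex.conj_ofReal, neg_mul]
  calc (starRingEnd ℂ) ((Hxi A0 A B C D τ ξ (Complex.I * ω)).det)
      = (Hxi A0 A B C D τ ξ ((starRingEnd ℂ) (Complex.I * ω))).det :=
        (det_Hxi_conj A0 A B C D τ ξ _).symm
    _ = (Hxi A0 A B C D τ ξ (-(Complex.I * ω))).det := by rw [h2]
    _ = (Hxi A0 A B C D τ ξ (Complex.I * ω)).det := det_Hxi_neg A0 A B C D τ ξ _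

end HxiAux

/-- for every `ω ∈ ℝ`, the complex derivative of `h_ξ(λ) = det H_ξ(λ)` at
`λ = iω` is purely imaginary. -/
theorem deriv_det_Hxi_on_imaginary_axis_purely_imaginary [NeZero n] [NeZero nu] [NeZero ny] [NeZero m]
    (A0 : Matrix (Fin n) (Fin n) ℝ) (A : Fin m → Matrix (Fin n) (Fin n) ℝ)
    (B : Matrix (Fin n) (Fin nu) ℝ) (C : Matrix (Fin ny) (Fin n) ℝ)
    (D : Matrix (Fin ny) (Fin nu) ℝ) (τ : Fin m → ℝ)
    (ξ : ℝ) (hξ : 0 < ξ) (hD : IsUnit (Dxi D ξ)) :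
    ∀ ω : ℝ, (deriv (fun lam : ℂ => (Hxi A0 A B C D τ ξ lam).det) (Complex.I * ω)).re = 0 := by
  intro ω
  set h : ℂ → ℂ := fun lam => (Hxi A0 A B C D τ ξ lam).det with hh
  by_cases hd : DifferentiableAt ℂ h (Complex.I * ω)
  · have hder : HasDerivAt h (deriv h (Complex.I * ω)) (Complex.I * ω) := hd.hasDerivAt
    have hc : HasDerivAt (fun t : ℝ => Complex.I * (t : ℂ)) Complex.I ω := by
      simpa using (Complex.ofRealCLM.hasDerivAt (x := ω)).const_mul Complex.I
    have hF : HasDerivAt (h ∘ fun t : ℝ => Complex.I * (t : ℂ))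
        (deriv h (Complex.I * ω) * Complex.I) ω := hder.comp ω hc
    have hIm : HasDerivAt (fun t : ℝ => (h (Complex.I * (t : ℂ))).im)
        ((deriv h (Complex.I * ω) * Complex.I).im) ω :=
      Complex.imCLM.hasFDerivAt.comp_hasDerivAt ω hF
    have hzero : (fun t : ℝ => (h (Complex.I * (t : ℂ))).im) = fun _ => (0 : ℝ) :=
      funext fun t => HxiAux.im_det_Hxi A0 A B C D τ ξ t
    rw [hzero] at hIm
    have huniq : (deriv h (Complex.I * ω) * Complex.I).im = 0 :=
      hIm.unique (hasDerivAt_const ω 0)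
    simpa [Complex.mul_im] using huniq
  · rw [deriv_zero_of_not_differentiableAt hd]
    simp
end
end

section
/- Let ξ > 0 be such that D_ξ := DᵀD − ξ²I is invertible, and let J ∈ ℝ^{2n×2n} be the block matrix J := [[0, −I_n],[I_n, 0]]. Then for all λ ∈ ℂ, H_ξ(−conj(λ)) = −(J · H_ξ(λ) · Jᵀ)*, where X* denotes conjugate transpose. -/
open Matrix Complex

noncomputable section

variable {n nu ny m : ℕ}

section AuxHxi

private lemma J_conj_blocks {R : Type*} [CommRing R] (a b c d : Matrix (Fin n) (Fin n) R) :
    (fromBlocks 0 (-1) 1 0 : Matrix (Fin n ⊕ Fin n) (Fin n ⊕ Fin n) R) * fromBlocks a b c d *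
      (fromBlocks 0 (-1) 1 0 : Matrix (Fin n ⊕ Fin n) (Fin n ⊕ Fin n) R)ᵀ
    = fromBlocks d (-c) (-b) a := by
  simp [Matrix.fromBlocks_transpose, Matrix.fromBlocks_multiply]

private lemma Dxi_inv_symm (D : Matrix (Fin ny) (Fin nu) ℝ) (ξ : ℝ) :
    ((Dxi D ξ)⁻¹)ᵀ = (Dxi D ξ)⁻¹ := by
  rw [Matrix.transpose_nonsing_inv]
  congr 1
  simp [Dxi, Matrix.transpose_sub, Matrix.transpose_mul, Matrix.transpose_smul]

private lemma DxiT_inv_symm (D : Matrix (Fin ny) (Fin nu) ℝ) (ξ : ℝ) :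
    ((DxiT D ξ)⁻¹)ᵀ = (DxiT D ξ)⁻¹ := by
  rw [Matrix.transpose_nonsing_inv]
  congr 1
  simp [DxiT, Matrix.transpose_sub, Matrix.transpose_mul, Matrix.transpose_smul]

private lemma Mzero_J (A0 : Matrix (Fin n) (Fin n) ℝ) (B : Matrix (Fin n) (Fin nu) ℝ)
    (C : Matrix (Fin ny) (Fin n) ℝ) (D : Matrix (Fin ny) (Fin nu) ℝ) (ξ : ℝ) :
    (fromBlocks 0 (-1) 1 0 : Matrix (Fin n ⊕ Fin n) (Fin n ⊕ Fin n) ℝ) * Mzero A0 B C D ξ *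
      (fromBlocks 0 (-1) 1 0 : Matrix (Fin n ⊕ Fin n) (Fin n ⊕ Fin n) ℝ)ᵀ
    = -(Mzero A0 B C D ξ)ᵀ := by
  unfold Mzero
  rw [J_conj_blocks, Matrix.fromBlocks_transpose, Matrix.fromBlocks_neg, Matrix.fromBlocks_inj]
  refine ⟨?_, ?_, ?_, ?_⟩ <;>
    simp only [Matrix.transpose_sub, Matrix.transpose_add, Matrix.transpose_neg,
      Matrix.transpose_smul, Matrix.transpose_mul, Matrix.transpose_transpose,
      Dxi_inv_symm, DxiT_inv_symm, Matrix.mul_assoc, neg_sub, neg_neg, neg_add] <;>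
    abel

private lemma Mpos_J (Ai : Matrix (Fin n) (Fin n) ℝ) :
    (fromBlocks 0 (-1) 1 0 : Matrix (Fin n ⊕ Fin n) (Fin n ⊕ Fin n) ℝ) * Mpos Ai *
      (fromBlocks 0 (-1) 1 0 : Matrix (Fin n ⊕ Fin n) (Fin n ⊕ Fin n) ℝ)ᵀ
    = -(Mneg Ai)ᵀ := by
  unfold Mpos Mneg
  rw [J_conj_blocks, Matrix.fromBlocks_transpose, Matrix.fromBlocks_neg]
  simp

private lemma Mneg_J (Ai : Matrix (Fin n) (Fin n) ℝ) :
    (fromBlocks 0 (-1) 1 0 : Matrix (Fin n ⊕ Fin n) (Fin n ⊕ Fin n) ℝ) * Mneg Ai *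
      (fromBlocks 0 (-1) 1 0 : Matrix (Fin n ⊕ Fin n) (Fin n ⊕ Fin n) ℝ)ᵀ
    = -(Mpos Ai)ᵀ := by
  unfold Mpos Mneg
  rw [J_conj_blocks, Matrix.fromBlocks_transpose, Matrix.fromBlocks_neg]
  simp

private lemma map_mul_ofReal {p q r : ℕ} (M : Matrix (Fin p ⊕ Fin p) (Fin q ⊕ Fin q) ℝ)
    (N : Matrix (Fin q ⊕ Fin q) (Fin r ⊕ Fin r) ℝ) :
    (M * N).map Complex.ofReal = M.map Complex.ofReal * N.map Complex.ofReal := by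
  ext i j
  simp [Matrix.mul_apply, Matrix.map_apply]

private lemma conjTranspose_map_ofReal {p q : ℕ} (M : Matrix (Fin p ⊕ Fin p) (Fin q ⊕ Fin q) ℝ) :
    (M.map Complex.ofReal)ᴴ = Mᵀ.map Complex.ofReal := by
  ext i j
  simp [Matrix.conjTranspose_apply, Matrix.map_apply, Complex.conj_ofReal]

private lemma J_conj_complex (M N : Matrix (Fin n ⊕ Fin n) (Fin n ⊕ Fin n) ℝ)
    (h : (fromBlocks 0 (-1) 1 0 : Matrix (Fin n ⊕ Fin n) (Fin n ⊕ Fin n) ℝ) * M *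
      (fromBlocks 0 (-1) 1 0 : Matrix (Fin n ⊕ Fin n) (Fin n ⊕ Fin n) ℝ)ᵀ = -Nᵀ) :
    ((fromBlocks 0 (-1) 1 0 : Matrix (Fin n ⊕ Fin n) (Fin n ⊕ Fin n) ℝ).map Complex.ofReal) *
      M.map Complex.ofReal *
      ((fromBlocks 0 (-1) 1 0 : Matrix (Fin n ⊕ Fin n) (Fin n ⊕ Fin n) ℝ).map Complex.ofReal)ᵀ
    = -(N.map Complex.ofReal)ᴴ := by
  rw [conjTranspose_map_ofReal, ← Matrix.transpose_map, ← map_mul_ofReal, ← map_mul_ofReal, h]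
  ext i j
  simp [Matrix.map_apply]

end AuxHxi

/-- with `J = [[0, −I],[I, 0]]`, we have `H_ξ(−conj λ) = −(J H_ξ(λ) Jᵀ)*`. -/
theorem Hxi_neg_conj_eq [NeZero n] [NeZero nu] [NeZero ny] [NeZero m]
    (A0 : Matrix (Fin n) (Fin n) ℝ) (A : Fin m → Matrix (Fin n) (Fin n) ℝ)
    (B : Matrix (Fin n) (Fin nu) ℝ) (C : Matrix (Fin ny) (Fin n) ℝ)
    (D : Matrix (Fin ny) (Fin nu) ℝ) (τ : Fin m → ℝ)
    (ξ : ℝ) (hξ : 0 < ξ) (hD : IsUnit (Dxi D ξ)) :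
    ∀ lam : ℂ,
      Hxi A0 A B C D τ ξ (-(starRingEnd ℂ) lam)
        = -((((fromBlocks 0 (-1) 1 0 : Matrix (Fin n ⊕ Fin n) (Fin n ⊕ Fin n) ℝ).map Complex.ofReal)
              * Hxi A0 A B C D τ ξ lam
              * ((fromBlocks 0 (-1) 1 0 : Matrix (Fin n ⊕ Fin n) (Fin n ⊕ Fin n) ℝ).map Complex.ofReal)ᵀ)ᴴ) := by
  intro lam
  set J : Matrix (Fin n ⊕ Fin n) (Fin n ⊕ Fin n) ℝ := fromBlocks 0 (-1) 1 0 with hJ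
  set Jc : Matrix (Fin n ⊕ Fin n) (Fin n ⊕ Fin n) ℂ := J.map Complex.ofReal with hJc
  have hJJR : J * Jᵀ = 1 := by
    rw [hJ]
    simp [Matrix.fromBlocks_transpose, Matrix.fromBlocks_multiply, ← Matrix.fromBlocks_one]
  have hJJ : Jc * Jcᵀ = 1 := by
    rw [hJc, ← Matrix.transpose_map, ← map_mul_ofReal, hJJR]
    exact Matrix.map_one _ Complex.ofReal_zero Complex.ofReal_one
  have hM0 := J_conj_complex (Mzero A0 B C D ξ) (Mzero A0 B C D ξ) (Mzero_J A0 B C D ξ)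
  have hP : ∀ i : Fin m, Jc * (Mpos (A i)).map Complex.ofReal * Jcᵀ
      = -(((Mneg (A i)).map Complex.ofReal)ᴴ) :=
    fun i => J_conj_complex (Mpos (A i)) (Mneg (A i)) (Mpos_J (A i))
  have hN : ∀ i : Fin m, Jc * (Mneg (A i)).map Complex.ofReal * Jcᵀ
      = -(((Mpos (A i)).map Complex.ofReal)ᴴ) :=
    fun i => J_conj_complex (Mneg (A i)) (Mpos (A i)) (Mneg_J (A i))
  have expand : Jc * Hxi A0 A B C D τ ξ lam * Jcᵀ
      = lam • (1 : Matrix (Fin n ⊕ Fin n) (Fin n ⊕ Fin n) ℂ)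
        - -(((Mzero A0 B C D ξ).map Complex.ofReal)ᴴ)
        - ∑ i : Fin m,
            (Complex.exp (-lam * (τ i : ℂ)) • -(((Mneg (A i)).map Complex.ofReal)ᴴ)
              + Complex.exp (lam * (τ i : ℂ)) • -(((Mpos (A i)).map Complex.ofReal)ᴴ)) := by
    unfold Hxi
    simp only [sub_mul, mul_sub, add_mul, mul_add, Finset.sum_mul, Finset.mul_sum,
      Matrix.smul_mul, Matrix.mul_smul, Matrix.one_mul, Matrix.mul_one]
    rw [hJJ, hM0]
    congr 1
    refine Finset.sum_congr rfl fun i _ => ?_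
    rw [hP i, hN i]
  rw [expand]
  unfold Hxi
  simp only [Matrix.conjTranspose_sub, Matrix.conjTranspose_smul, Matrix.conjTranspose_neg,
    Matrix.conjTranspose_one, Matrix.conjTranspose_conjTranspose, Matrix.conjTranspose_sum,
    Matrix.conjTranspose_add, neg_neg, smul_neg]
  simp only [Complex.star_def, ← Complex.exp_conj, map_neg, _root_.map_mul,
    Complex.conj_ofReal]
  rw [Finset.sum_congr rfl (fun (i : Fin m) _ => by
    rw [add_comm] :
    ∀ i ∈ Finset.univ,
      -(Complex.exp (-((starRingEnd ℂ) lam) * (τ i : ℂ)) • (Mneg (A i)).map Complex.ofReal)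
        + -(Complex.exp ((starRingEnd ℂ) lam * (τ i : ℂ)) • (Mpos (A i)).map Complex.ofReal)
      = -(Complex.exp ((starRingEnd ℂ) lam * (τ i : ℂ)) • (Mpos (A i)).map Complex.ofReal)
        + -(Complex.exp (-((starRingEnd ℂ) lam) * (τ i : ℂ)) • (Mneg (A i)).map Complex.ofReal))]
  simp only [← neg_add, Finset.sum_neg_distrib, neg_smul]
  abel
end
end

section
/- Let ξ > 0 be such that D_ξ := DᵀD − ξ²I is invertible, let ω ∈ ℝ, and let u, v ∈ ℂ^n. If the column vector [u; v] ∈ ℂ^{2n} satisfies H_ξ(iω)·[u; v] = 0, then the row vector [−v*, u*] ∈ ℂ^{1×2n} satisfies [−v*, u*]·H_ξ(iω) = 0; i.e. [−v*, u*] is a left null vector of H_ξ(iω). -/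
open Matrix Complex

noncomputable section

variable {n nu ny m : ℕ}

/-! With `J = [[0, -I], [I, 0]]`, the block structure of `M₀` and the symmetry of `D_ξ⁻¹` and
`(DDᵀ - ξ²I)⁻¹` give `J M₀ J = M₀ᵀ`, while `J Mᵢ J = M₋ᵢᵀ` and `J M₋ᵢ J = Mᵢᵀ`. Hence
`H_ξ(λ)ᴴ = J H_ξ(-λ̄) J`, and on the imaginary axis `H_ξ(iω)ᴴ = J H_ξ(iω) J`. If `H_ξ(iω) w = 0`
then `H_ξ(iω)ᴴ (J w) = -J H_ξ(iω) w = 0`, i.e. `(J w)* = [−v*, u*]` is a left null vector. -/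

namespace Matrix

variable {l R : Type*} [DecidableEq l] [Fintype l] [CommRing R]

theorem J_mul_fromBlocks_mul_J (A B C D : Matrix l l R) :
    J l R * fromBlocks A B C D * J l R = fromBlocks (-D) C B (-A) := by
  simp [J, fromBlocks_multiply]

theorem vecMul_star_J_mulVec_eq_zero [StarRing R] {H : Matrix (l ⊕ l) (l ⊕ l) R}
    (hH : Hᴴ = J l R * H * J l R) {w : l ⊕ l → R} (hw : H *ᵥ w = 0) :
    star (J l R *ᵥ w) ᵥ* H = 0 := by
  have hJw : Hᴴ *ᵥ (J l R *ᵥ w) = 0 := by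
    rw [hH, mulVec_mulVec, Matrix.mul_assoc, J_squared, Matrix.mul_neg, Matrix.mul_one,
      neg_mulVec, ← mulVec_mulVec, hw, mulVec_zero, neg_zero]
  rw [← conjTranspose_conjTranspose H, ← star_mulVec, hJw, star_zero]

theorem J_mul_map_ofReal_mul_J {M T : Matrix (l ⊕ l) (l ⊕ l) ℝ}
    (h : J l ℝ * M * J l ℝ = Tᵀ) :
    J l ℂ * M.map ofReal * J l ℂ = (T.map ofReal)ᴴ := by
  have hmap := congrArg (Matrix.map · ofRealHom) h
  simp only [Matrix.map_mul, map_J] at hmap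
  rw [← conjTranspose_map ofReal (fun _ => (conj_ofReal _).symm),
    conjTranspose_eq_transpose_of_trivial]
  exact hmap

end Matrix

theorem isSymm_Dxi (D : Matrix (Fin ny) (Fin nu) ℝ) (ξ : ℝ) : (Dxi D ξ).IsSymm := by
  simp [Dxi, IsSymm, transpose_sub, transpose_mul]

theorem isSymm_DxiT (D : Matrix (Fin ny) (Fin nu) ℝ) (ξ : ℝ) : (DxiT D ξ).IsSymm := by
  simp [DxiT, IsSymm, transpose_sub, transpose_mul]

theorem J_mul_Mzero_mul_J (A0 : Matrix (Fin n) (Fin n) ℝ) (B : Matrix (Fin n) (Fin nu) ℝ)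
    (C : Matrix (Fin ny) (Fin n) ℝ) (D : Matrix (Fin ny) (Fin nu) ℝ) (ξ : ℝ) :
    J (Fin n) ℝ * Mzero A0 B C D ξ * J (Fin n) ℝ = (Mzero A0 B C D ξ)ᵀ := by
  have hD := (isSymm_Dxi D ξ).inv.eq
  have hDT := (isSymm_DxiT D ξ).inv.eq
  rw [Mzero, J_mul_fromBlocks_mul_J, fromBlocks_transpose]
  congr 1 <;> simp [transpose_mul, hD, hDT, Matrix.mul_assoc] <;> abel

theorem J_mul_Mpos_mul_J (Ai : Matrix (Fin n) (Fin n) ℝ) :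
    J (Fin n) ℝ * Mpos Ai * J (Fin n) ℝ = (Mneg Ai)ᵀ := by
  simp [Mpos, Mneg, J_mul_fromBlocks_mul_J, fromBlocks_transpose]

theorem J_mul_Mneg_mul_J (Ai : Matrix (Fin n) (Fin n) ℝ) :
    J (Fin n) ℝ * Mneg Ai * J (Fin n) ℝ = (Mpos Ai)ᵀ := by
  simp [Mpos, Mneg, J_mul_fromBlocks_mul_J, fromBlocks_transpose]

theorem conjTranspose_Hxi (A0 : Matrix (Fin n) (Fin n) ℝ) (A : Fin m → Matrix (Fin n) (Fin n) ℝ)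
    (B : Matrix (Fin n) (Fin nu) ℝ) (C : Matrix (Fin ny) (Fin n) ℝ)
    (D : Matrix (Fin ny) (Fin nu) ℝ) (τ : Fin m → ℝ) (ξ : ℝ) (lam : ℂ) :
    (Hxi A0 A B C D τ ξ lam)ᴴ = J (Fin n) ℂ * Hxi A0 A B C D τ ξ (-star lam) * J (Fin n) ℂ := by
  simp only [Hxi, conjTranspose_sub, conjTranspose_sum, conjTranspose_add, conjTranspose_smul,
    conjTranspose_one, Matrix.mul_sub, Matrix.sub_mul, Finset.mul_sum, Finset.sum_mul,
    Matrix.mul_add, Matrix.add_mul, Matrix.mul_smul, Matrix.smul_mul, Matrix.mul_one, J_squared,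
    J_mul_map_ofReal_mul_J (J_mul_Mzero_mul_J A0 B C D ξ),
    J_mul_map_ofReal_mul_J (J_mul_Mpos_mul_J _), J_mul_map_ofReal_mul_J (J_mul_Mneg_mul_J _)]
  rw [neg_smul_neg]
  congr 1
  refine Finset.sum_congr rfl fun i _ => ?_
  rw [add_comm]
  simp [← exp_conj]

theorem left_null_vector_of_Hxi_general
    (A0 : Matrix (Fin n) (Fin n) ℝ) (A : Fin m → Matrix (Fin n) (Fin n) ℝ)
    (B : Matrix (Fin n) (Fin nu) ℝ) (C : Matrix (Fin ny) (Fin n) ℝ)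
    (D : Matrix (Fin ny) (Fin nu) ℝ) (τ : Fin m → ℝ)
    (ξ : ℝ) (ω : ℝ) (u v : Fin n → ℂ)
    (h : Hxi A0 A B C D τ ξ (Complex.I * ω) *ᵥ Sum.elim u v = 0) :
    Sum.elim (fun i => -(starRingEnd ℂ) (v i)) (fun i => (starRingEnd ℂ) (u i))
        ᵥ* Hxi A0 A B C D τ ξ (Complex.I * ω) = 0 := by
  have hvec : Sum.elim (fun i => -(starRingEnd ℂ) (v i)) (fun i => (starRingEnd ℂ) (u i))
      = star (J (Fin n) ℂ *ᵥ Sum.elim u v) := by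
    ext (i | i) <;> simp [J, fromBlocks_mulVec, neg_mulVec]
  have himag : -star (I * ω) = I * ω := by simp
  rw [hvec]
  exact vecMul_star_J_mulVec_eq_zero (by rw [conjTranspose_Hxi, himag]) h

/-- if `[u; v]` is a (right) null vector of `H_ξ(iω)`, then `[−v*, u*]` is a
left null vector of `H_ξ(iω)`. -/
theorem left_null_vector_of_Hxi [NeZero n] [NeZero nu] [NeZero ny] [NeZero m]
    (A0 : Matrix (Fin n) (Fin n) ℝ) (A : Fin m → Matrix (Fin n) (Fin n) ℝ)
    (B : Matrix (Fin n) (Fin nu) ℝ) (C : Matrix (Fin ny) (Fin n) ℝ)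
    (D : Matrix (Fin ny) (Fin nu) ℝ) (τ : Fin m → ℝ)
    (ξ : ℝ) (hξ : 0 < ξ) (hD : IsUnit (Dxi D ξ)) (ω : ℝ) (u v : Fin n → ℂ)
    (h : Hxi A0 A B C D τ ξ (Complex.I * ω) *ᵥ Sum.elim u v = 0) :
    Sum.elim (fun i => -(starRingEnd ℂ) (v i)) (fun i => (starRingEnd ℂ) (u i))
        ᵥ* Hxi A0 A B C D τ ξ (Complex.I * ω) = 0 :=
  left_null_vector_of_Hxi_general A0 A B C D τ ξ ω u v h
end
end

section
/- Let ξ > 0 be such that D_ξ := DᵀD − ξ²I is invertible, let ω ∈ ℝ, and let u, v ∈ ℂ^n. Let K(ω) denote the derivative with respect to the real variable ω of the matrix-valued map ω ↦ H_ξ(iω), i.e. K(ω) = iI − Σ_{i=1}^m (−iτ_i M_i e^{−iωτ_i} + iτ_i M_{−i} e^{iωτ_i}). Then the scalar [−v*, u*] · K(ω) · [u; v] equals 2·Im( v* (I + Σ_{i=1}^m τ_i A_i e^{−iωτ_i}) u ); in particular this scalar is real. -/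
open Matrix Complex

noncomputable section

variable {n nu ny m : ℕ}

/-- `K(ω)`, the derivative with respect to the real variable `ω` of `ω ↦ H_ξ(iω)`:
`K(ω) = iI − Σᵢ (−iτᵢ Mᵢ e^{−iωτᵢ} + iτᵢ M₋ᵢ e^{iωτᵢ})`. -/
def Kmat (A : Fin m → Matrix (Fin n) (Fin n) ℝ) (τ : Fin m → ℝ) (ω : ℝ) :
    Matrix (Fin n ⊕ Fin n) (Fin n ⊕ Fin n) ℂ :=
  Complex.I • (1 : Matrix (Fin n ⊕ Fin n) (Fin n ⊕ Fin n) ℂ)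
    - ∑ i : Fin m,
        ((-(Complex.I * (τ i : ℂ)) * Complex.exp (-(Complex.I * ω) * (τ i : ℂ)))
            • (Mpos (A i)).map Complex.ofReal
          + (Complex.I * (τ i : ℂ) * Complex.exp (Complex.I * ω * (τ i : ℂ)))
            • (Mneg (A i)).map Complex.ofReal)


section AuxKmat

lemma vdot_sum' {ι α β : Type*} [DecidableEq ι] [Fintype α] [Fintype β] (w : α → ℂ) (z : β → ℂ)
    (s : Finset ι) (M : ι → Matrix α β ℂ) :
    (w ᵥ* ∑ i ∈ s, M i) ⬝ᵥ z = ∑ i ∈ s, (w ᵥ* M i) ⬝ᵥ z := by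
  induction s using Finset.induction with
  | empty => simp [Matrix.vecMul, dotProduct]
  | @insert a s h ih =>
      rw [Finset.sum_insert h, Finset.sum_insert h, ← ih, Matrix.vecMul_add,
        add_dotProduct]

lemma vdot_smul' {α β : Type*} [Fintype α] [Fintype β] (w : α → ℂ) (z : β → ℂ)
    (c : ℂ) (M : Matrix α β ℂ) :
    (w ᵥ* (c • M)) ⬝ᵥ z = c * ((w ᵥ* M) ⬝ᵥ z) := by
  rw [← Matrix.dotProduct_mulVec, ← Matrix.dotProduct_mulVec]
  simp [Matrix.smul_mulVec, dotProduct_smul, smul_eq_mul]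

lemma dot_conjM' {n : ℕ} (v u : Fin n → ℂ) (M : Matrix (Fin n) (Fin n) ℝ) :
    star u ⬝ᵥ ((M.map Complex.ofReal)ᵀ *ᵥ v)
      = (starRingEnd ℂ) (star v ⬝ᵥ (M.map Complex.ofReal *ᵥ u)) := by
  simp only [dotProduct, Matrix.mulVec, Matrix.transpose_apply, Matrix.map_apply,
    Pi.star_apply, map_sum, Finset.mul_sum]
  rw [Finset.sum_comm]
  refine Finset.sum_congr rfl fun j _ => Finset.sum_congr rfl fun k _ => ?_
  simp only [_root_.map_mul, Complex.conj_conj, Complex.conj_ofReal, RCLike.star_def]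
  ring

lemma dot_conj0' {n : ℕ} (v u : Fin n → ℂ) :
    star u ⬝ᵥ v = (starRingEnd ℂ) (star v ⬝ᵥ u) := by
  simp only [dotProduct, Pi.star_apply, map_sum, _root_.map_mul, Complex.conj_conj,
    RCLike.star_def]
  exact Finset.sum_congr rfl fun k _ => by ring

lemma two_im_eq' (z : ℂ) : ((2 * z.im : ℝ) : ℂ) = Complex.I * ((starRingEnd ℂ) z - z) := by
  have h := Complex.sub_conj z
  push_cast at h ⊢
  linear_combination Complex.I * h + (2 * z.im : ℂ) * Complex.I_sq

end AuxKmat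

/-- `[−v*, u*] · K(ω) · [u; v] = 2·Im(v* (I + Σᵢ τᵢ Aᵢ e^{−iωτᵢ}) u)`,
in particular this scalar is real. -/
theorem left_right_Kmat_product [NeZero n] [NeZero nu] [NeZero ny] [NeZero m]
    (A0 : Matrix (Fin n) (Fin n) ℝ) (A : Fin m → Matrix (Fin n) (Fin n) ℝ)
    (B : Matrix (Fin n) (Fin nu) ℝ) (C : Matrix (Fin ny) (Fin n) ℝ)
    (D : Matrix (Fin ny) (Fin nu) ℝ) (τ : Fin m → ℝ)
    (ξ : ℝ) (hξ : 0 < ξ) (hD : IsUnit (Dxi D ξ)) (ω : ℝ) (u v : Fin n → ℂ) :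
    (Sum.elim (fun i => -(starRingEnd ℂ) (v i)) (fun i => (starRingEnd ℂ) (u i))
        ᵥ* Kmat A τ ω) ⬝ᵥ Sum.elim u v
      = ((2 * ((star v) ⬝ᵥ
          (((1 : Matrix (Fin n) (Fin n) ℂ)
              + ∑ i : Fin m, ((τ i : ℂ) * Complex.exp (-(Complex.I * ω) * (τ i : ℂ)))
                  • (A i).map Complex.ofReal) *ᵥ u)).im : ℝ) : ℂ) ∧
    ((Sum.elim (fun i => -(starRingEnd ℂ) (v i)) (fun i => (starRingEnd ℂ) (u i))
        ᵥ* Kmat A τ ω) ⬝ᵥ Sum.elim u v).im = 0 := by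
  classical
  have hpos : ∀ i : Fin m,
      (Sum.elim (fun i => -(starRingEnd ℂ) (v i)) (fun i => (starRingEnd ℂ) (u i))
        ᵥ* ((Mpos (A i)).map Complex.ofReal)) ⬝ᵥ Sum.elim u v
      = -(star v ⬝ᵥ ((A i).map Complex.ofReal *ᵥ u)) := by
    intro i
    have hw : (fun j => -(starRingEnd ℂ) (v j)) = -(star v) := by funext j; simp
    rw [Mpos, Matrix.fromBlocks_map, Matrix.vecMul_fromBlocks,
      sumElim_dotProduct_sumElim, hw]
    simp [Matrix.neg_vecMul, neg_dotProduct, Matrix.dotProduct_mulVec]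
  have hneg : ∀ i : Fin m,
      (Sum.elim (fun i => -(starRingEnd ℂ) (v i)) (fun i => (starRingEnd ℂ) (u i))
        ᵥ* ((Mneg (A i)).map Complex.ofReal)) ⬝ᵥ Sum.elim u v
      = -((starRingEnd ℂ) (star v ⬝ᵥ ((A i).map Complex.ofReal *ᵥ u))) := by
    intro i
    have hw : (fun j => (starRingEnd ℂ) (u j)) = star u := by funext j; simp
    have hmn : (-(A i)ᵀ).map Complex.ofReal = -(((A i).map Complex.ofReal)ᵀ) := by
      ext j k; simp
    rw [Mneg, Matrix.fromBlocks_map, Matrix.vecMul_fromBlocks,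
      sumElim_dotProduct_sumElim, hw, ← dot_conjM', hmn]
    simp [Matrix.vecMul_neg, neg_dotProduct, Matrix.dotProduct_mulVec]
  have hI : (Sum.elim (fun i => -(starRingEnd ℂ) (v i)) (fun i => (starRingEnd ℂ) (u i))
        ᵥ* (Complex.I • (1 : Matrix (Fin n ⊕ Fin n) (Fin n ⊕ Fin n) ℂ))) ⬝ᵥ Sum.elim u v
      = Complex.I * (-(star v ⬝ᵥ u) + (starRingEnd ℂ) (star v ⬝ᵥ u)) := by
    have hw : (fun j => -(starRingEnd ℂ) (v j)) = -(star v) := by funext j; simp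
    have hw2 : (fun j => (starRingEnd ℂ) (u j)) = star u := by funext j; simp
    rw [vdot_smul', Matrix.vecMul_one, sumElim_dotProduct_sumElim, hw, hw2,
      neg_dotProduct, dot_conj0' v u]
  have hL : (Sum.elim (fun i => -(starRingEnd ℂ) (v i)) (fun i => (starRingEnd ℂ) (u i))
        ᵥ* Kmat A τ ω) ⬝ᵥ Sum.elim u v
      = Complex.I * (-(star v ⬝ᵥ u) + (starRingEnd ℂ) (star v ⬝ᵥ u))
        - ∑ i : Fin m,
          ((-(Complex.I * (τ i : ℂ)) * Complex.exp (-(Complex.I * ω) * (τ i : ℂ)))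
              * (-(star v ⬝ᵥ ((A i).map Complex.ofReal *ᵥ u)))
            + (Complex.I * (τ i : ℂ) * Complex.exp (Complex.I * ω * (τ i : ℂ)))
              * (-((starRingEnd ℂ) (star v ⬝ᵥ ((A i).map Complex.ofReal *ᵥ u))))) := by
    rw [Kmat, Matrix.vecMul_sub, sub_dotProduct, hI, vdot_sum']
    congr 1
    refine Finset.sum_congr rfl fun i _ => ?_
    rw [Matrix.vecMul_add, add_dotProduct, vdot_smul', vdot_smul', hpos i, hneg i]
  have hS : star v ⬝ᵥ
        (((1 : Matrix (Fin n) (Fin n) ℂ)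
            + ∑ i : Fin m, ((τ i : ℂ) * Complex.exp (-(Complex.I * ω) * (τ i : ℂ)))
                • (A i).map Complex.ofReal) *ᵥ u)
      = star v ⬝ᵥ u + ∑ i : Fin m,
          ((τ i : ℂ) * Complex.exp (-(Complex.I * ω) * (τ i : ℂ)))
            * (star v ⬝ᵥ ((A i).map Complex.ofReal *ᵥ u)) := by
    rw [Matrix.dotProduct_mulVec, Matrix.vecMul_add, add_dotProduct,
      Matrix.vecMul_one, vdot_sum']
    congr 1
    refine Finset.sum_congr rfl fun i _ => ?_
    rw [vdot_smul', Matrix.dotProduct_mulVec]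
  have key : (Sum.elim (fun i => -(starRingEnd ℂ) (v i)) (fun i => (starRingEnd ℂ) (u i))
        ᵥ* Kmat A τ ω) ⬝ᵥ Sum.elim u v
      = ((2 * ((star v) ⬝ᵥ
          (((1 : Matrix (Fin n) (Fin n) ℂ)
              + ∑ i : Fin m, ((τ i : ℂ) * Complex.exp (-(Complex.I * ω) * (τ i : ℂ)))
                  • (A i).map Complex.ofReal) *ᵥ u)).im : ℝ) : ℂ) := by
    rw [hL, hS, two_im_eq']
    simp only [map_add, map_sum, _root_.map_mul, Complex.conj_ofReal]
    have hexp : ∀ i : Fin m,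
        (starRingEnd ℂ) (Complex.exp (-(Complex.I * ω) * (τ i : ℂ)))
          = Complex.exp (Complex.I * ω * (τ i : ℂ)) := by
      intro i
      rw [← Complex.exp_conj]
      congr 1
      simp [_root_.map_mul, map_neg, Complex.conj_I, Complex.conj_ofReal]
    simp only [hexp]
    have hterm : ∀ i ∈ (Finset.univ : Finset (Fin m)),
        (-(Complex.I * (τ i : ℂ)) * Complex.exp (-(Complex.I * ω) * (τ i : ℂ)))
            * (-(star v ⬝ᵥ ((A i).map Complex.ofReal *ᵥ u)))
          + (Complex.I * (τ i : ℂ) * Complex.exp (Complex.I * ω * (τ i : ℂ)))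
            * (-((starRingEnd ℂ) (star v ⬝ᵥ ((A i).map Complex.ofReal *ᵥ u))))
        = Complex.I * ((τ i : ℂ) * Complex.exp (-(Complex.I * ω) * (τ i : ℂ))
              * (star v ⬝ᵥ ((A i).map Complex.ofReal *ᵥ u)))
          - Complex.I * ((τ i : ℂ) * Complex.exp (Complex.I * ω * (τ i : ℂ))
              * ((starRingEnd ℂ) (star v ⬝ᵥ ((A i).map Complex.ofReal *ᵥ u)))) := by
      intro i _
      ring
    rw [Finset.sum_congr rfl hterm, Finset.sum_sub_distrib]
    simp only [mul_sub, mul_add, Finset.mul_sum]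
    ring
  refine ⟨key, ?_⟩
  rw [key]
  exact Complex.ofReal_im _
end
end

section
/- Let ξ > 0 be such that D_ξ := DᵀD − ξ²I is invertible. Then the set { ω ∈ ℝ : det H_ξ(iω) = 0 } is finite; i.e. the operator L_ξ has only finitely many eigenvalues on the imaginary axis. -/
open Matrix Complex

noncomputable section

variable {n nu ny m : ℕ}

/-!
For real `ω`, `H_ξ(iω)` differs from `iω • 1` by `M₀ + Σᵢ (e^{-iωτᵢ} Mᵢ + e^{iωτᵢ} M₋ᵢ)`, whose
norm is bounded independently of `ω` because the exponentials have modulus one. Hence `iω` is not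
in its spectrum once `|ω|` exceeds that bound, so the real zeros of `ω ↦ det H_ξ(iω)` lie in a
compact interval. This function is the restriction of an entire function and does not vanish
identically, so its zeros there are isolated, hence finitely many.
-/

section

variable {ι : Type*} [Fintype ι] [DecidableEq ι]

theorem Differentiable.matrix_det {𝕜 E : Type*} [NontriviallyNormedField 𝕜]
    [NormedAddCommGroup E] [NormedSpace 𝕜 E] {M : E → Matrix ι ι 𝕜}
    (hM : ∀ i j, Differentiable 𝕜 fun x => M x i j) : Differentiable 𝕜 fun x => (M x).det := by
  simp only [Matrix.det_apply]
  fun_prop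

attribute [local instance] Matrix.linftyOpNormedRing Matrix.linftyOpNormedAlgebra in
theorem Matrix.det_ne_zero_of_norm_smul_one_sub_lt {𝕜 : Type*} [RCLike 𝕜] {H : Matrix ι ι 𝕜}
    {μ : 𝕜} (h : ‖μ • 1 - H‖ < ‖μ‖) : H.det ≠ 0 := by
  -- `‖1‖ = 1`, needed for the spectrum bound, only holds for nonempty `ι`
  cases isEmpty_or_nonempty ι
  · simp [Matrix.det_isEmpty]
  intro hdet
  have hμ : μ ∈ spectrum 𝕜 (μ • 1 - H) := by
    rw [spectrum.mem_iff, Algebra.algebraMap_eq_smul_one, sub_sub_cancel,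
      Matrix.isUnit_iff_isUnit_det, hdet]
    exact not_isUnit_zero
  exact (spectrum.norm_le_norm_of_mem hμ).not_gt h

end

theorem Differentiable.analyticOnNhd_comp_ofReal {E : Type*} [NormedAddCommGroup E]
    [NormedSpace ℂ E] [CompleteSpace E] {f : ℂ → E} (hf : Differentiable ℂ f) :
    AnalyticOnNhd ℝ (fun x : ℝ => f x) Set.univ := fun x _ =>
  (hf.analyticAt (x : ℂ)).restrictScalars.comp (ofRealCLM.analyticAt x)

theorem AnalyticOnNhd.finite_setOf_eq_zero_of_ne_zero_of_abs_gt {E : Type*} [NormedAddCommGroup E]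
    [NormedSpace ℝ E] [CompleteSpace E] {g : ℝ → E} (hg : AnalyticOnNhd ℝ g Set.univ) {R : ℝ}
    (hR : ∀ x, R < |x| → g x ≠ 0) : {x | g x = 0}.Finite := by
  set r := |R| + 1
  have hr : R < |r| := by rw [abs_of_pos (by positivity)]; linarith [le_abs_self R]
  rcases (hg.mono (Set.subset_univ (Set.Icc (-r) r))).eqOn_zero_or_eventually_ne_zero_of_preconnected
    isPreconnected_Icc with hzero | hcodiscrete
  · exact absurd (hzero ⟨by linarith [abs_nonneg R], le_rfl⟩) (hR r hr)
  · refine (isCompact_Icc.finite_sdiff_of_mem_codiscreteWithin hcodiscrete).subset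
      fun x hx => ⟨?_, not_not_intro hx⟩
    rw [Set.mem_Icc, ← abs_le]
    by_contra h
    exact hR x (by linarith [le_abs_self R]) hx

section Hxi

variable (A0 : Matrix (Fin n) (Fin n) ℝ) (A : Fin m → Matrix (Fin n) (Fin n) ℝ)
  (B : Matrix (Fin n) (Fin nu) ℝ) (C : Matrix (Fin ny) (Fin n) ℝ) (D : Matrix (Fin ny) (Fin nu) ℝ)
  (τ : Fin m → ℝ) (ξ : ℝ)

theorem differentiable_det_Hxi : Differentiable ℂ fun lam => (Hxi A0 A B C D τ ξ lam).det :=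
  Differentiable.matrix_det fun i j => by
    simp only [Hxi, Matrix.sub_apply, Matrix.smul_apply, Matrix.sum_apply, Matrix.add_apply,
      smul_eq_mul]
    fun_prop

attribute [local instance] Matrix.linftyOpNormedRing Matrix.linftyOpNormedAlgebra

theorem norm_smul_one_sub_Hxi_I_mul_le (ω : ℝ) :
    ‖(I * ω) • (1 : Matrix (Fin n ⊕ Fin n) (Fin n ⊕ Fin n) ℂ) - Hxi A0 A B C D τ ξ (I * ω)‖ ≤
      ‖(Mzero A0 B C D ξ).map ofReal‖
        + ∑ i, (‖(Mpos (A i)).map ofReal‖ + ‖(Mneg (A i)).map ofReal‖) := by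
  rw [Hxi, sub_sub, sub_sub_cancel]
  refine (norm_add_le _ _).trans (add_le_add_right ((norm_sum_le _ _).trans
    (Finset.sum_le_sum fun i _ => (norm_add_le _ _).trans ?_)) _)
  simp [norm_smul, Complex.norm_exp]

theorem exists_det_Hxi_I_mul_ne_zero_of_abs_gt :
    ∃ R, ∀ ω : ℝ, R < |ω| → (Hxi A0 A B C D τ ξ (I * ω)).det ≠ 0 :=
  ⟨_, fun ω hω => det_ne_zero_of_norm_smul_one_sub_lt <|
    (norm_smul_one_sub_Hxi_I_mul_le A0 A B C D τ ξ ω).trans_lt <| by simpa using hω⟩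

end Hxi

theorem finite_imaginary_axis_eigenvalues_general
    (A0 : Matrix (Fin n) (Fin n) ℝ) (A : Fin m → Matrix (Fin n) (Fin n) ℝ)
    (B : Matrix (Fin n) (Fin nu) ℝ) (C : Matrix (Fin ny) (Fin n) ℝ)
    (D : Matrix (Fin ny) (Fin nu) ℝ) (τ : Fin m → ℝ)
    (ξ : ℝ) :
    {ω : ℝ | (Hxi A0 A B C D τ ξ (Complex.I * ω)).det = 0}.Finite := by
  obtain ⟨R, hR⟩ := exists_det_Hxi_I_mul_ne_zero_of_abs_gt A0 A B C D τ ξ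
  have hdiff : Differentiable ℂ fun z => (Hxi A0 A B C D τ ξ (I * z)).det :=
    (differentiable_det_Hxi A0 A B C D τ ξ).comp (differentiable_id.const_mul I)
  exact hdiff.analyticOnNhd_comp_ofReal.finite_setOf_eq_zero_of_ne_zero_of_abs_gt hR

/-- the set of `ω ∈ ℝ` with `det H_ξ(iω) = 0` is finite, i.e. `L_ξ` has only
finitely many eigenvalues on the imaginary axis. -/
theorem finite_imaginary_axis_eigenvalues [NeZero n] [NeZero nu] [NeZero ny] [NeZero m]
    (A0 : Matrix (Fin n) (Fin n) ℝ) (A : Fin m → Matrix (Fin n) (Fin n) ℝ)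
    (B : Matrix (Fin n) (Fin nu) ℝ) (C : Matrix (Fin ny) (Fin n) ℝ)
    (D : Matrix (Fin ny) (Fin nu) ℝ) (τ : Fin m → ℝ) (hτ : ∀ i, 0 ≤ τ i)
    (ξ : ℝ) (hξ : 0 < ξ) (hD : IsUnit (Dxi D ξ)) :
    {ω : ℝ | (Hxi A0 A B C D τ ξ (Complex.I * ω)).det = 0}.Finite :=
  finite_imaginary_axis_eigenvalues_general A0 A B C D τ ξ
end
end
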